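/- arXiv:2303.07570 — 3 statements merged into one kernel-verified Lean document; each statement's English description precedes it below -/
import Mathlib

section
/- Under the CPDP policy with sufficiently large absolute constants c_m, c_λ, c_γ, Assumptions 2.1, 2.2 and the SNR Assumption 4.1 (with c_snr* > 2c_snr/c_m), there exists an absolute constant C_{R,I} depending only on c_m, C_r and C_b such that the regret incurred during price experiments satisfies R_{T,I} ≤ C_{R,I}·s·log(Td)·√(Υ_T·T). -/
open MeasureTheory ProbabilityTheory Real Finset
open scoped ENNReal NNReal

noncomputable section

namespace CPDP

/-- The ℓ¹-norm of a vector in `ℝ^d`. -/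
def l1 {d : ℕ} (v : Fin d → ℝ) : ℝ := ∑ i, |v i|

/-- The ℓ²-norm of a vector in `ℝ^d`. -/
def l2 {d : ℕ} (v : Fin d → ℝ) : ℝ := Real.sqrt (∑ i, v i ^ 2)


/-- The ℓ^∞-norm of a vector in `ℝ^d`. -/
def linf {d : ℕ} (v : Fin d → ℝ) : ℝ := ⨆ i, |v i|

/-- Euclidean inner product. -/
def dot {d : ℕ} (x v : Fin d → ℝ) : ℝ := ∑ i, x i * v i

/-- Size of the support of a vector. -/
def spars {d : ℕ} (v : Fin d → ℝ) : ℕ := (Finset.univ.filter fun i => v i ≠ 0).card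

/-- The ℓ¹-ball parameter space `Θ = {θ : ‖θ‖₁ ≤ Cθ}`. -/
def Theta (d : ℕ) (Cθ : ℝ) : Set (Fin d → ℝ) := {θ | l1 θ ≤ Cθ}

/-- Augment a feature vector `z ∈ ℝ^{d-1}` with a price `p` to form the covariate
`x = (zᵀ, p)ᵀ ∈ ℝ^d`. -/
def aug (d : ℕ) (z : Fin (d - 1) → ℝ) (p : ℝ) : Fin d → ℝ :=
  fun i => if h : (i : ℕ) < d - 1 then z ⟨i, h⟩ else p

/-- The negative log-likelihood `L(θ, I) = ∑_{t∈I} {ψ(x_tᵀθ) − y_t x_tᵀθ}`. -/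
def nll {d : ℕ} (ψ : ℝ → ℝ) (x : ℕ → Fin d → ℝ) (y : ℕ → ℝ) (I : Finset ℕ)
    (θ : Fin d → ℝ) : ℝ := ∑ t ∈ I, (ψ (dot (x t) θ) - y t * dot (x t) θ)

/-- The ℓ¹-penalised likelihood (Lasso) objective. -/
def lassoObj {d : ℕ} (ψ : ℝ → ℝ) (lam : ℝ) (x : ℕ → Fin d → ℝ) (y : ℕ → ℝ)
    (I : Finset ℕ) (θ : Fin d → ℝ) : ℝ :=
  nll ψ x y I θ + lam * Real.sqrt I.card * l1 θ

/-- `θhat` is a Lasso estimator on the index set `I`. -/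
def IsLasso {d : ℕ} (ψ : ℝ → ℝ) (lam Cθ : ℝ) (x : ℕ → Fin d → ℝ) (y : ℕ → ℝ)
    (I : Finset ℕ) (θhat : Fin d → ℝ) : Prop :=
  θhat ∈ Theta d Cθ ∧ ∀ θ ∈ Theta d Cθ, lassoObj ψ lam x y I θhat ≤ lassoObj ψ lam x y I θ

/-- Conditional-MGF characterisation of the GLM demand model with log-partition `ψ` and
scale parameter `a = a(φ)`: conditionally on the σ-algebra `m` (which contains the
information in `x`), `y` is distributed according to the exponential-dispersion family
with natural parameter `xᵀθ`. -/
def GLMStep {Ω : Type*} [MeasurableSpace Ω] (μ : Measure Ω) (ψ : ℝ → ℝ) (a : ℝ)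
    (m : MeasurableSpace Ω) {d : ℕ} (x : Ω → Fin d → ℝ) (y : Ω → ℝ)
    (θ : Fin d → ℝ) : Prop :=
  ∀ u : ℝ, MeasureTheory.condExp m μ (fun ω => Real.exp (u * y ω)) =ᵐ[μ]
    fun ω => Real.exp ((ψ (dot (x ω) θ + u * a) - ψ (dot (x ω) θ)) / a)

/-- Uniform distribution on a finite price-experiment set. -/
def unifOn (P : Finset ℝ) : Measure ℝ := (P.card : ℝ≥0∞)⁻¹ • ∑ p ∈ P, Measure.dirac p

/-- `ψ''_u`, the supremum of `ψ''` over `|x| ≤ (Cθ+1)·C_b`. -/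
def psi2u (ψ : ℝ → ℝ) (Cb Cθ : ℝ) : ℝ :=
  sSup (deriv (deriv ψ) '' Set.Icc (-((Cθ + 1) * Cb)) ((Cθ + 1) * Cb))

/-- `ψ''_l`, the infimum of `ψ''` over `|x| ≤ Cθ·C_b`. -/
def psi2l (ψ : ℝ → ℝ) (Cb Cθ : ℝ) : ℝ :=
  sInf (deriv (deriv ψ) '' Set.Icc (-(Cθ * Cb)) (Cθ * Cb))

/-- `ψ'_u`, the supremum of `|ψ'|` over `|x| ≤ Cθ·C_b`. -/
def psi1u (ψ : ℝ → ℝ) (Cb Cθ : ℝ) : ℝ :=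
  sSup ((fun v => |deriv ψ v|) '' Set.Icc (-(Cθ * Cb)) (Cθ * Cb))

/-- `dL(Δ, θ, I)`, the remainder of the negative log-likelihood beyond its linearisation,
normalised by `|I|`. -/
def dL {d : ℕ} (ψ : ℝ → ℝ) (x : ℕ → Fin d → ℝ) (yv : ℕ → ℝ) (I : Finset ℕ)
    (θ Δ : Fin d → ℝ) : ℝ :=
  (nll ψ x yv I (fun i => θ i + Δ i) - nll ψ x yv I θ
    - ∑ t ∈ I, (deriv ψ (dot (x t) θ) - yv t) * dot (x t) Δ) / (I.card : ℝ)

/-- Expected revenue `r(p, θ, z) = p·ψ'(zᵀα + βp)`. -/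
def rev (d : ℕ) (ψ : ℝ → ℝ) (θ : Fin d → ℝ) (z : Fin (d - 1) → ℝ) (p : ℝ) : ℝ :=
  p * deriv ψ (dot (aug d z p) θ)

/-- `C_r = sup |(1/2)·∂²r(p,θ,z)/∂p²|` over the admissible region. -/
def CrSet (d : ℕ) (ψ : ℝ → ℝ) (pl pu Cb Cθ : ℝ) : Set ℝ :=
  {r | ∃ (θ : Fin d → ℝ) (zv : Fin (d - 1) → ℝ) (p : ℝ),
    (∀ i, |zv i| ≤ Cb) ∧ p ∈ Set.Icc pl pu ∧ l1 θ ≤ Cθ ∧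
    r = |(1 / 2 : ℝ) * iteratedDeriv 2 (fun p' => rev d ψ θ zv p') p|}

def CrC (d : ℕ) (ψ : ℝ → ℝ) (pl pu Cb Cθ : ℝ) : ℝ := sSup (CrSet d ψ pl pu Cb Cθ)


/-- Number of exploitation periods in a cycle after `k` detected change-points:
`n_k = √(T/(k+1))`. -/
def nExp (T k : ℕ) : ℕ := ⌈Real.sqrt ((T : ℝ) / (k + 1))⌉₊

/-- Cycle length `l_k = m + n_k`. -/
def cyc (T m k : ℕ) : ℕ := m + nExp T k

/-- The set of exploration (price-experiment) periods in `(τ̂_k, t]` when the cycles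
after the `k`-th detected change-point `τ̂_k` start with `m` exploration periods each. -/
def expSet (T m τk k t : ℕ) : Finset ℕ :=
  (Finset.Ioc τk t).filter fun u => (u - τk - 1) % cyc T m k < m

/-- The regime index (number of already detected change-points) at period `t`. -/
def regime (τh : ℕ → ℕ) (U t : ℕ) : ℕ :=
  ((Finset.range (U + 1)).filter fun k => τh k < t).sup id

/-- Period `t` is an exploration (price-experiment) period. -/
def isExpl (T m : ℕ) (τh : ℕ → ℕ) (U t : ℕ) : Prop :=
  (t - τh (regime τh U t) - 1) % cyc T m (regime τh U t) < m

instance (T m : ℕ) (τh : ℕ → ℕ) (U t : ℕ) : Decidable (isExpl T m τh U t) := by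
  unfold isExpl; infer_instance

/-- The penalised likelihood-ratio statistic of display (7) computed on the experiment
set `M`, split at time `t`. -/
def DstatSet {d : ℕ} (ψ : ℝ → ℝ) (lam : ℝ) (x : ℕ → Fin d → ℝ) (yv : ℕ → ℝ)
    (est : Finset ℕ → Fin d → ℝ) (M : Finset ℕ) (t : ℕ) : ℝ :=
  nll ψ x yv M (est M)
    - nll ψ x yv (M.filter (· ≤ t)) (est (M.filter (· ≤ t)))
    - nll ψ x yv (M.filter (t < ·)) (est (M.filter (t < ·)))
    + lam * Real.sqrt (M.filter (· ≤ t)).card *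
        l1 (fun i => est M i - est (M.filter (· ≤ t)) i)
    + lam * Real.sqrt (M.filter (t < ·)).card *
        l1 (fun i => est M i - est (M.filter (t < ·)) i)

/-- The CPT detector (Algorithm 2) flags non-stationarity on the experiment set `M`:
some admissible split (with at least `m` experiments on either side) has penalised
LRT statistic exceeding the threshold `γ`. -/
def CPTflag {d : ℕ} (ψ : ℝ → ℝ) (lam gam : ℝ) (m : ℕ) (x : ℕ → Fin d → ℝ)
    (yv : ℕ → ℝ) (est : Finset ℕ → Fin d → ℝ) (M : Finset ℕ) : Prop :=
  ∃ t, m ≤ (M.filter (· ≤ t)).card ∧ m ≤ (M.filter (t < ·)).card ∧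
    gam < DstatSet ψ lam x yv est M t

/-- The σ-algebra generated by the history strictly before period `t`, together with
the current covariate `z_t`. -/
def pastSA {Ω : Type} [MeasurableSpace Ω] {d : ℕ} (z : ℕ → Ω → Fin (d - 1) → ℝ)
    (y price q : ℕ → Ω → ℝ) (t : ℕ) : MeasurableSpace Ω :=
  (⨆ i ∈ Finset.range t,
    (MeasurableSpace.comap (y i) inferInstance ⊔
      MeasurableSpace.comap (price i) inferInstance ⊔
      MeasurableSpace.comap (q i) inferInstance ⊔
      MeasurableSpace.comap (z i) inferInstance)) ⊔
    MeasurableSpace.comap (z t) inferInstance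

/-- The σ-algebra generated by the history before period `t` together with the
current covariate, experiment price and posted price. -/
def histSA {Ω : Type} [MeasurableSpace Ω] {d : ℕ} (z : ℕ → Ω → Fin (d - 1) → ℝ)
    (y price q : ℕ → Ω → ℝ) (t : ℕ) : MeasurableSpace Ω :=
  pastSA z y price q t ⊔ MeasurableSpace.comap (q t) inferInstance ⊔
    MeasurableSpace.comap (price t) inferInstance

/-- The change size `κ_k = ‖θ_{τ_k+1} − θ_{τ_k}‖₂` at the `k`-th change-point. -/
def kappa {d : ℕ} (θ : ℕ → Fin d → ℝ) (τ : ℕ → ℕ) (k : ℕ) : ℝ :=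
  l2 (fun i => θ (τ k + 1) i - θ (τ k) i)

/-- The smallest change size `κ_min = min_{1 ≤ k ≤ Υ} κ_k`. -/
def kappaMin {d : ℕ} (θ : ℕ → Fin d → ℝ) (τ : ℕ → ℕ) (Υ : ℕ) : ℝ :=
  sInf {r : ℝ | ∃ k, 1 ≤ k ∧ k ≤ Υ ∧ r = kappa θ τ k}

/-- **Assumption 4.1 (signal-to-noise ratio):**
`min((τ_k − τ_{k−1})/l_{k−1}, (τ_{k+1} − τ_k)/l_{k−1}) · κ_k² > c_snr*` for all `k`. -/
def SNR {d : ℕ} (T m Υ : ℕ) (τ : ℕ → ℕ) (θ : ℕ → Fin d → ℝ) (cstar : ℝ) : Prop :=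
  ∀ k, 1 ≤ k → k ≤ Υ →
    cstar < min (((τ k - τ (k - 1) : ℕ) : ℝ) / cyc T m (k - 1))
        (((τ (k + 1) - τ k : ℕ) : ℝ) / cyc T m (k - 1)) * kappa θ τ k ^ 2

/-- **Assumptions 2.1 and 2.2** for the non-stationary environment over the horizon
`{1,…,T}`: `Υ` change-points `0 = τ₀ < τ₁ < ⋯ < τ_Υ < τ_{Υ+1} = T`, with
`θ_t ≠ θ_{t+1}` iff `t` is a change-point; `θ_t ∈ Θ` with sparsity at most `s`;
covariates independent, identically distributed within each stationary segment,
entrywise bounded by `C_b`, and satisfying the second-moment and `(2+δ)`-moment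
conditions. -/
structure Env {Ω : Type} [MeasurableSpace Ω] (μ : Measure Ω)
    (d T s Υ : ℕ) (ψ : ℝ → ℝ) (Cb Cθ σl σu δ : ℝ)
    (τ : ℕ → ℕ) (θ : ℕ → Fin d → ℝ) (z : ℕ → Ω → Fin (d - 1) → ℝ) : Prop where
  ψ_smooth : ContDiff ℝ (⊤ : ℕ∞) ψ
  ψ_convex : ∀ v : ℝ, 0 < deriv (deriv ψ) v
  τ_zero : τ 0 = 0
  τ_last : τ (Υ + 1) = T
  τ_mono : ∀ k ≤ Υ, τ k < τ (k + 1)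
  change_iff : ∀ t, 1 ≤ t → t < T → (θ t ≠ θ (t + 1) ↔ ∃ k, 1 ≤ k ∧ k ≤ Υ ∧ τ k = t)
  θ_mem : ∀ t, θ t ∈ Theta d Cθ
  θ_sparse : ∀ t, spars (θ t) ≤ s
  meas_z : ∀ t, Measurable (z t)
  z_indep : iIndepFun z μ
  z_ident : ∀ k ≤ Υ, ∀ t ∈ Finset.Ioc (τ k) (τ (k + 1)), ∀ t' ∈ Finset.Ioc (τ k) (τ (k + 1)),
    IdentDistrib (z t) (z t') μ μ
  z_bdd : ∀ t ω i, |z t ω i| ≤ Cb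
  z_mom2 : ∀ t, 1 ≤ t → t ≤ T → ∀ Δ : Fin (d - 1) → ℝ, (∑ i, Δ i ^ 2) = 1 →
    σl ≤ ∫ ω, (∑ i, Δ i * z t ω i) ^ 2 ∂μ
  z_mom2δ : ∀ t, 1 ≤ t → t ≤ T → ∀ Δ : Fin (d - 1) → ℝ, (∑ i, Δ i ^ 2) = 1 →
    ∫ ω, |∑ i, Δ i * z t ω i| ^ ((2 : ℝ) + δ) ∂μ ≤ σu

/-- `popt t ω` is the (unique) optimal price `p_t* = φ(θ_t, z_t)` (Assumption 2.1(iv)). -/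
def OptPrices {Ω : Type} {d : ℕ} (ψ : ℝ → ℝ) (pl pu : ℝ) (T : ℕ)
    (θ : ℕ → Fin d → ℝ) (z : ℕ → Ω → Fin (d - 1) → ℝ) (popt : ℕ → Ω → ℝ) : Prop :=
  ∀ t, 1 ≤ t → t ≤ T → ∀ ω, popt t ω ∈ Set.Icc pl pu ∧
    IsMaxOn (fun pr => rev d ψ (θ t) (z t ω) pr) (Set.Icc pl pu) (popt t ω) ∧
    ∀ p' ∈ Set.Icc pl pu,
      IsMaxOn (fun pr => rev d ψ (θ t) (z t ω) pr) (Set.Icc pl pu) p' → p' = popt t ω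

/-- A run of the **CPDP policy (Algorithm 1)** on the demand environment
`(θ, z, y)`: in each cycle after the `k`-th detected change-point `τ̂_k`, the first
`m` periods are price experiments with prices drawn i.i.d. uniformly from the
experiment set `P̃` and appended to the experiment data `M_k`; the CPT detector
(penalised LRT with Lasso parameter `λ`, threshold `γ` and trimming `m`) is run on
the accumulated experiment data at the end of every exploration block, and upon the
first flag the change-point `τ̂_{k+1}` is recorded and the experiment data reset;
otherwise the next `n_k = √(T/(k+1))` periods are priced greedily at
`φ(θ̂_{M_k}, z_t)`, where `θ̂_{M_k}` is the Lasso estimator on `M_k`.  The demand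
`y_t` follows, conditionally on the history and the posted price, the GLM with
log-partition `ψ`, scale `a` and current parameter `θ_t`. -/
structure CPDPRun (Ω : Type) [MeasurableSpace Ω] (μ : Measure Ω)
    (d T s : ℕ) (ψ : ℝ → ℝ) (a pl pu Cθ lam gam : ℝ) (Ptil : Finset ℝ) (m : ℕ)
    (θ : ℕ → Fin d → ℝ) (z : ℕ → Ω → Fin (d - 1) → ℝ) (y : ℕ → Ω → ℝ) where
  /-- the posted prices -/
  price : ℕ → Ω → ℝ
  /-- the stream of uniform experiment prices -/
  q : ℕ → Ω → ℝ
  /-- the detected change-points, `τ̂_0 = 0` -/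
  tauhat : Ω → ℕ → ℕ
  /-- the number of detected change-points over the horizon -/
  Uhat : Ω → ℕ
  /-- the greedy price map `(θ̂, z) ↦ φ(θ̂, z)` -/
  greedy : (Fin d → ℝ) → (Fin (d - 1) → ℝ) → ℝ
  /-- the Lasso estimator selector -/
  est : Ω → Finset ℕ → Fin d → ℝ
  meas_y : ∀ t, Measurable (y t)
  meas_price : ∀ t, Measurable (price t)
  meas_q : ∀ t, Measurable (q t)
  meas_tauhat : ∀ k, Measurable fun ω => tauhat ω k
  meas_Uhat : Measurable Uhat
  Ptil_sub : (Ptil : Set ℝ) ⊆ Set.Icc pl pu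
  Ptil_card : 2 ≤ Ptil.card
  q_indep : iIndepFun q μ
  q_unif : ∀ t, Measure.map (q t) μ = unifOn Ptil
  q_fresh : ∀ t, Indep (MeasurableSpace.comap (q t) inferInstance) (pastSA z y price q t) μ
  qz_indep : Indep (⨆ t, MeasurableSpace.comap (q t) inferInstance)
    (⨆ t, MeasurableSpace.comap (z t) inferInstance) μ
  /-- the demand follows the GLM with the current parameter, conditionally on the past -/
  glm : ∀ t, 1 ≤ t → t ≤ T →
    GLMStep μ ψ a (histSA z y price q t) (fun ω => aug d (z t ω) (price t ω)) (y t) (θ t)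
  tauhat_zero : ∀ ω, tauhat ω 0 = 0
  tauhat_mono : ∀ ω, ∀ k < Uhat ω, tauhat ω k < tauhat ω (k + 1)
  tauhat_lt : ∀ ω, ∀ k ≤ Uhat ω, tauhat ω k < T
  tauhat_top : ∀ ω, ∀ k, Uhat ω < k → tauhat ω k = T
  /-- `est` is a Lasso estimator on every index set -/
  est_lasso : ∀ ω I,
    IsLasso ψ lam Cθ (fun t => aug d (z t ω) (price t ω)) (fun t => y t ω) I (est ω I)
  /-- the greedy price maximises the estimated revenue over the price range -/
  greedy_mem : ∀ ϑ zv, greedy ϑ zv ∈ Set.Icc pl pu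
  greedy_opt : ∀ ϑ zv, IsMaxOn (fun pr => rev d ψ ϑ zv pr) (Set.Icc pl pu) (greedy ϑ zv)
  /-- during exploration periods the experiment price is posted -/
  explore_price : ∀ ω t, 1 ≤ t → t ≤ T →
    isExpl T m (tauhat ω) (Uhat ω) t → price t ω = q t ω
  /-- during exploitation periods the greedy price based on the Lasso estimator on the
  accumulated experiment data of the current regime is posted -/
  exploit_price : ∀ ω t, 1 ≤ t → t ≤ T →
    ¬ isExpl T m (tauhat ω) (Uhat ω) t →
    price t ω = greedy
      (est ω (expSet T m (tauhat ω (regime (tauhat ω) (Uhat ω) t))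
        (regime (tauhat ω) (Uhat ω) t) t)) (z t ω)
  /-- `τ̂_{k+1}` is recorded at the end of the first exploration block at which the
  CPT detector flags the accumulated experiment data of regime `k` -/
  detect : ∀ ω, ∀ k < Uhat ω, ∃ e : ℕ, 1 ≤ e ∧
    tauhat ω (k + 1) = tauhat ω k + (e - 1) * cyc T m k + m ∧
    CPTflag ψ lam gam m (fun t => aug d (z t ω) (price t ω)) (fun t => y t ω) (est ω)
      (expSet T m (tauhat ω k) k (tauhat ω (k + 1))) ∧
    ∀ e', 1 ≤ e' → e' < e →
      ¬ CPTflag ψ lam gam m (fun t => aug d (z t ω) (price t ω)) (fun t => y t ω) (est ω)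
        (expSet T m (tauhat ω k) k (tauhat ω k + (e' - 1) * cyc T m k + m))
  /-- after the last detected change-point, the CPT detector never flags again -/
  no_detect : ∀ ω e, 1 ≤ e →
    tauhat ω (Uhat ω) + (e - 1) * cyc T m (Uhat ω) + m ≤ T →
    ¬ CPTflag ψ lam gam m (fun t => aug d (z t ω) (price t ω)) (fun t => y t ω) (est ω)
      (expSet T m (tauhat ω (Uhat ω)) (Uhat ω)
        (tauhat ω (Uhat ω) + (e - 1) * cyc T m (Uhat ω) + m))

/-- The cumulative expected regret of the price process `price` relative to the
clairvoyant optimal prices `popt`. -/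
def regret {Ω : Type} [MeasurableSpace Ω] (μ : Measure Ω) (d T : ℕ) (ψ : ℝ → ℝ)
    (θ : ℕ → Fin d → ℝ) (z : ℕ → Ω → Fin (d - 1) → ℝ) (popt price : ℕ → Ω → ℝ) : ℝ :=
  ∑ t ∈ Finset.Icc 1 T,
    ∫ ω, (rev d ψ (θ t) (z t ω) (popt t ω) - rev d ψ (θ t) (z t ω) (price t ω)) ∂μ

/-- The good event `A`: all `Υ` change-points are detected, each within the
controllable detection delay `d_k = ⌈c_snr/(c_m κ_k²)⌉·l_{k−1}`. -/
def goodEvent {Ω : Type} {d : ℕ} (T m Υ : ℕ) (τ : ℕ → ℕ) (θ : ℕ → Fin d → ℝ)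
    (cm csnr : ℝ) (tauhat : Ω → ℕ → ℕ) (Uhat : Ω → ℕ) : Set Ω :=
  {ω | Uhat ω = Υ ∧ ∀ k, 1 ≤ k → k ≤ Υ →
    τ k ≤ tauhat ω k ∧
      tauhat ω k ≤ τ k + ⌈csnr / (cm * kappa θ τ k ^ 2)⌉₊ * cyc T m (k - 1)}

/-- `R_{T,I}`: regret incurred during price experiments (on the good event `A`). -/
def RTI {Ω : Type} [MeasurableSpace Ω] (μ : Measure Ω) (T m : ℕ) (Cr : ℝ) (A : Set Ω)
    (tauhat : Ω → ℕ → ℕ) (Uhat : Ω → ℕ) (popt price : ℕ → Ω → ℝ) : ℝ :=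
  Cr * ∫ ω, A.indicator (fun ω' => ∑ t ∈ Finset.Icc 1 T,
    if isExpl T m (tauhat ω') (Uhat ω') t then (popt t ω' - price t ω') ^ 2 else 0) ω ∂μ

/-- `R_{T,II}`: regret incurred during change-point detection delays
(exploitation periods in `(τ_k, τ̂_k]`, on the good event `A`). -/
def RTII {Ω : Type} [MeasurableSpace Ω] (μ : Measure Ω) (T m Υ : ℕ) (Cr : ℝ) (A : Set Ω)
    (τ : ℕ → ℕ) (tauhat : Ω → ℕ → ℕ) (Uhat : Ω → ℕ) (popt price : ℕ → Ω → ℝ) : ℝ :=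
  Cr * ∑ k ∈ Finset.Icc 1 Υ, ∫ ω, A.indicator (fun ω' =>
    ∑ t ∈ Finset.Ioc (τ k) (tauhat ω' k),
      if isExpl T m (tauhat ω') (Uhat ω') t then 0 else (popt t ω' - price t ω') ^ 2) ω ∂μ

/-- `R_{T,III}`: regret due to parameter-estimation error during exploitation
(exploitation periods in `(τ̂_k, τ_{k+1}]`, on the good event `A`). -/
def RTIII {Ω : Type} [MeasurableSpace Ω] (μ : Measure Ω) (T m Υ : ℕ) (Cr : ℝ) (A : Set Ω)
    (τ : ℕ → ℕ) (tauhat : Ω → ℕ → ℕ) (Uhat : Ω → ℕ) (popt price : ℕ → Ω → ℝ) : ℝ :=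
  Cr * ∑ k ∈ Finset.range (Υ + 1), ∫ ω, A.indicator (fun ω' =>
    ∑ t ∈ Finset.Ioc (tauhat ω' k) (τ (k + 1)),
      if isExpl T m (tauhat ω') (Uhat ω') t then 0 else (popt t ω' - price t ω') ^ 2) ω ∂μ

/-- `R_{T,IV}`: regret incurred on the event of failed change-point detection. -/
def RTIV {Ω : Type} [MeasurableSpace Ω] (μ : Measure Ω) (T : ℕ) (Cr : ℝ) (A : Set Ω)
    (popt price : ℕ → Ω → ℝ) : ℝ :=
  Cr * ∫ ω, Aᶜ.indicator (fun ω' =>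
    ∑ t ∈ Finset.Icc 1 T, (popt t ω' - price t ω') ^ 2) ω ∂μ


/-! ### Auxiliary lemmas for Lemma EC.9 -/

private lemma sup_id_mem (F : Finset ℕ) (h : F.Nonempty) : F.sup id ∈ F := by
  obtain ⟨b, hb, he⟩ := Finset.exists_mem_eq_sup F h id
  rw [he]; exact hb

private lemma count_mod_lt (L c m : ℕ) :
    ((Finset.range L).filter (fun u => u % c < m)).card ≤ m * (L / c + 1) := by
  classical
  have hsub : ((Finset.range L).filter (fun u => u % c < m)) ⊆
      Finset.image (fun p : ℕ × ℕ => p.1 * c + p.2)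
        ((Finset.range (L / c + 1)) ×ˢ Finset.range m) := by
    intro u hu
    simp only [Finset.mem_filter, Finset.mem_range] at hu
    refine Finset.mem_image.2 ⟨(u / c, u % c), ?_, ?_⟩
    · simp only [Finset.mem_product, Finset.mem_range]
      exact ⟨Nat.lt_succ_of_le (Nat.div_le_div_right hu.1.le), hu.2⟩
    · exact Nat.div_add_mod' u c
  calc ((Finset.range L).filter (fun u => u % c < m)).card
      ≤ _ := Finset.card_le_card hsub
    _ ≤ ((Finset.range (L / c + 1)) ×ˢ Finset.range m).card := Finset.card_image_le
    _ = (L / c + 1) * m := by simp [Finset.card_product]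
    _ = m * (L / c + 1) := Nat.mul_comm _ _

private lemma count_expl_Ioc (a b c m : ℕ) :
    ((Finset.Ioc a b).filter (fun t => (t - a - 1) % c < m)).card ≤ m * ((b - a) / c + 1) := by
  classical
  refine le_trans (Finset.card_le_card_of_injOn (fun t => t - a - 1) ?_ ?_)
    (count_mod_lt (b - a) c m)
  · intro t ht
    simp only [Finset.mem_filter, Finset.mem_Ioc] at ht ⊢
    simp only [Finset.coe_filter, Finset.mem_Ioc, Finset.mem_range, Set.mem_setOf_eq] at ht ⊢
    exact ⟨by omega, ht.2⟩
  · intro t1 h1 t2 h2 h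
    simp only [Finset.coe_filter, Set.mem_setOf_eq, Finset.mem_Ioc] at h1 h2
    have h' : t1 - a - 1 = t2 - a - 1 := h
    omega

private lemma deriv2_formula (ψ : ℝ → ℝ) (hψ : ContDiff ℝ (⊤ : ℕ∞) ψ) (c β p : ℝ) :
    deriv (deriv (fun p' => p' * deriv ψ (c + β * p'))) p =
      2 * β * deriv (deriv ψ) (c + β * p) +
        p * β ^ 2 * deriv (deriv (deriv ψ)) (c + β * p) := by
  have hψ' : ContDiff ℝ ((⊤ : ℕ∞) : WithTop ℕ∞) ψ := hψ.of_le (by simp)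
  have k1 : ContDiff ℝ ((⊤ : ℕ∞) : WithTop ℕ∞) (deriv ψ) := by
    have := hψ'.iterate_deriv 1; simpa using this
  have k2 : ContDiff ℝ ((⊤ : ℕ∞) : WithTop ℕ∞) (deriv (deriv ψ)) := by
    have := hψ'.iterate_deriv 2
    simpa [Function.iterate_succ', Function.comp] using this
  have h1 : Differentiable ℝ (deriv ψ) := k1.differentiable (by simp)
  have h2 : Differentiable ℝ (deriv (deriv ψ)) := k2.differentiable (by simp)
  have hlin : ∀ x : ℝ, HasDerivAt (fun p' : ℝ => c + β * p') β x := by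
    intro x
    simpa using ((hasDerivAt_id x).const_mul β).const_add c
  have hd1 : ∀ x : ℝ, HasDerivAt (fun p' => p' * deriv ψ (c + β * p'))
      (deriv ψ (c + β * x) + x * (deriv (deriv ψ) (c + β * x) * β)) x := by
    intro x
    have hg : HasDerivAt (fun p' => deriv ψ (c + β * p'))
        (deriv (deriv ψ) (c + β * x) * β) x :=
      HasDerivAt.comp (h₂ := deriv ψ) x ((h1 (c + β * x)).hasDerivAt) (hlin x)
    simpa using (hasDerivAt_id' x).fun_mul hg
  have hder1 : deriv (fun p' => p' * deriv ψ (c + β * p')) =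
      fun x => deriv ψ (c + β * x) + x * (deriv (deriv ψ) (c + β * x) * β) :=
    funext fun x => (hd1 x).deriv
  rw [hder1]
  have hg2 : HasDerivAt (fun x => deriv ψ (c + β * x))
      (deriv (deriv ψ) (c + β * p) * β) p := HasDerivAt.comp (h₂ := deriv ψ) p ((h1 (c + β * p)).hasDerivAt) (hlin p)
  have hg3 : HasDerivAt (fun x => deriv (deriv ψ) (c + β * x))
      (deriv (deriv (deriv ψ)) (c + β * p) * β) p :=
    HasDerivAt.comp (h₂ := deriv (deriv ψ)) p ((h2 (c + β * p)).hasDerivAt) (hlin p)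
  have hprod : HasDerivAt (fun x => x * (deriv (deriv ψ) (c + β * x) * β))
      (1 * (deriv (deriv ψ) (c + β * p) * β) +
        p * (deriv (deriv (deriv ψ)) (c + β * p) * β * β)) p := by
    simpa [mul_assoc] using (hasDerivAt_id' p).fun_mul (hg3.mul_const β)
  rw [(hg2.fun_add hprod).deriv]
  ring

private lemma exists_crc_bound (ψ : ℝ → ℝ) (hψ : ContDiff ℝ (⊤ : ℕ∞) ψ) (pl pu Cb Cθ : ℝ)
    (hrange : pl ≤ pu) (hCb : 0 ≤ Cb) (hCθ : 0 ≤ Cθ) :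
    ∃ B : ℝ, 0 ≤ B ∧ ∀ d : ℕ, 0 ≤ CrC d ψ pl pu Cb Cθ ∧ CrC d ψ pl pu Cb Cθ ≤ B := by
  classical
  have hψ' : ContDiff ℝ ((⊤ : ℕ∞) : WithTop ℕ∞) ψ := hψ.of_le (by simp)
  have k2 : ContDiff ℝ ((⊤ : ℕ∞) : WithTop ℕ∞) (deriv (deriv ψ)) := by
    have := hψ'.iterate_deriv 2
    simpa [Function.iterate_succ', Function.comp] using this
  have k3 : ContDiff ℝ ((⊤ : ℕ∞) : WithTop ℕ∞) (deriv (deriv (deriv ψ))) := by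
    have := hψ'.iterate_deriv 3
    simpa [Function.iterate_succ', Function.comp] using this
  set P : ℝ := max |pl| |pu| with hP
  have hP0 : 0 ≤ P := le_trans (abs_nonneg pl) (le_max_left _ _)
  set R : ℝ := Cθ * Cb + Cθ * P with hR
  obtain ⟨M2, hM2⟩ := (isCompact_Icc : IsCompact (Set.Icc (-R) R)).exists_bound_of_continuousOn
    k2.continuous.continuousOn
  obtain ⟨M3, hM3⟩ := (isCompact_Icc : IsCompact (Set.Icc (-R) R)).exists_bound_of_continuousOn
    k3.continuous.continuousOn
  refine ⟨Cθ * max M2 0 + P * Cθ ^ 2 * max M3 0, by positivity, fun d => ?_⟩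
  have hkey : ∀ r ∈ CrSet d ψ pl pu Cb Cθ,
      r ≤ Cθ * max M2 0 + P * Cθ ^ 2 * max M3 0 := by
    rintro r ⟨θ, zv, p, hz, hp, hθ, hr⟩
    set c : ℝ := ∑ i : Fin d, (if h : (i : ℕ) < d - 1 then zv ⟨i, h⟩ * θ i else 0) with hc
    set β : ℝ := ∑ i : Fin d, (if (i : ℕ) < d - 1 then 0 else θ i) with hβ
    have hdot : ∀ p' : ℝ, dot (aug d zv p') θ = c + β * p' := by
      intro p'
      have hsplit : ∀ i : Fin d, aug d zv p' i * θ i =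
          (if h : (i : ℕ) < d - 1 then zv ⟨i, h⟩ * θ i else 0) +
            (if (i : ℕ) < d - 1 then 0 else θ i) * p' := by
        intro i
        unfold aug
        by_cases h : (i : ℕ) < d - 1
        · simp [h]
        · simp only [dif_neg h, if_neg h]
          ring
      unfold dot
      rw [Finset.sum_congr rfl (fun i _ => hsplit i), Finset.sum_add_distrib, ← Finset.sum_mul]
    have hfeq : (fun p' => rev d ψ θ zv p') = fun p' => p' * deriv ψ (c + β * p') := by
      funext p'
      unfold rev
      rw [hdot p']
    have hl1 : ∑ i : Fin d, |θ i| ≤ Cθ := hθ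
    have hcb : |c| ≤ Cθ * Cb := by
      calc |c| ≤ ∑ i : Fin d, |if h : (i : ℕ) < d - 1 then zv ⟨i, h⟩ * θ i else 0| := by
            rw [hc]; exact Finset.abs_sum_le_sum_abs _ _
        _ ≤ ∑ i : Fin d, Cb * |θ i| := by
            refine Finset.sum_le_sum (fun i _ => ?_)
            by_cases h : (i : ℕ) < d - 1
            · rw [dif_pos h, abs_mul]
              exact mul_le_mul_of_nonneg_right (hz _) (abs_nonneg _)
            · rw [dif_neg h, abs_zero]; positivity
        _ = Cb * ∑ i : Fin d, |θ i| := by rw [Finset.mul_sum]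
        _ ≤ Cb * Cθ := mul_le_mul_of_nonneg_left hl1 hCb
        _ = Cθ * Cb := mul_comm _ _
    have hβb : |β| ≤ Cθ := by
      calc |β| ≤ ∑ i : Fin d, |if (i : ℕ) < d - 1 then 0 else θ i| := by
            rw [hβ]; exact Finset.abs_sum_le_sum_abs _ _
        _ ≤ ∑ i : Fin d, |θ i| := by
            refine Finset.sum_le_sum (fun i _ => ?_)
            by_cases h : (i : ℕ) < d - 1 <;> simp [h]
        _ ≤ Cθ := hl1
    have hpb : |p| ≤ P := by
      rw [abs_le]
      obtain ⟨hp1, hp2⟩ := hp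
      have h3 : |pl| ≤ P := le_max_left _ _
      have h4 : |pu| ≤ P := le_max_right _ _
      have h1 := neg_abs_le pl
      have h2 := le_abs_self pu
      constructor <;> [linarith; linarith]
    have hX : c + β * p ∈ Set.Icc (-R) R := by
      have h1 : |c + β * p| ≤ Cθ * Cb + Cθ * P := by
        calc |c + β * p| ≤ |c| + |β| * |p| := by
              rw [← abs_mul]; exact abs_add_le _ _
          _ ≤ Cθ * Cb + Cθ * P := by
              have h5 : |β| * |p| ≤ Cθ * P := mul_le_mul hβb hpb (abs_nonneg _) hCθ
              linarith
      rw [abs_le] at h1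
      rw [Set.mem_Icc, hR]
      exact h1
    have h2b : |deriv (deriv ψ) (c + β * p)| ≤ max M2 0 := by
      have := hM2 _ hX
      rw [Real.norm_eq_abs] at this
      exact this.trans (le_max_left _ _)
    have h3b : |deriv (deriv (deriv ψ)) (c + β * p)| ≤ max M3 0 := by
      have := hM3 _ hX
      rw [Real.norm_eq_abs] at this
      exact this.trans (le_max_left _ _)
    have hiter : iteratedDeriv 2 (fun p' => rev d ψ θ zv p') p =
        2 * β * deriv (deriv ψ) (c + β * p) +
          p * β ^ 2 * deriv (deriv (deriv ψ)) (c + β * p) := by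
      rw [hfeq, show (2 : ℕ) = 1 + 1 from rfl, iteratedDeriv_succ, iteratedDeriv_one]
      exact deriv2_formula ψ hψ c β p
    rw [hr, hiter]
    have e1 : |2 * β * deriv (deriv ψ) (c + β * p)| ≤ 2 * Cθ * max M2 0 := by
      rw [abs_mul, abs_mul, abs_two]
      have hβ0 := abs_nonneg β
      have hg0 := abs_nonneg (deriv (deriv ψ) (c + β * p))
      have hM20 : (0 : ℝ) ≤ max M2 0 := le_max_right _ _
      nlinarith
    have e2 : |p * β ^ 2 * deriv (deriv (deriv ψ)) (c + β * p)| ≤ P * Cθ ^ 2 * max M3 0 := by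
      rw [abs_mul, abs_mul, abs_pow]
      have hβ2 : |β| ^ 2 ≤ Cθ ^ 2 := pow_le_pow_left₀ (abs_nonneg _) hβb 2
      have hp0 := abs_nonneg p
      have hβ0 := abs_nonneg β
      have hg0 := abs_nonneg (deriv (deriv (deriv ψ)) (c + β * p))
      have hM30 : (0 : ℝ) ≤ max M3 0 := le_max_right _ _
      have hβ20 : (0 : ℝ) ≤ |β| ^ 2 := by positivity
      have s1 : |p| * |β| ^ 2 ≤ P * Cθ ^ 2 := mul_le_mul hpb hβ2 hβ20 hP0
      exact mul_le_mul s1 h3b hg0 (by positivity)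
    have habs : |(1 / 2 : ℝ) * (2 * β * deriv (deriv ψ) (c + β * p) +
        p * β ^ 2 * deriv (deriv (deriv ψ)) (c + β * p))| ≤
        (1 / 2) * (2 * Cθ * max M2 0 + P * Cθ ^ 2 * max M3 0) := by
      rw [abs_mul]
      have := (abs_add_le (2 * β * deriv (deriv ψ) (c + β * p))
        (p * β ^ 2 * deriv (deriv (deriv ψ)) (c + β * p))).trans (add_le_add e1 e2)
      calc |(1 / 2 : ℝ)| * |2 * β * deriv (deriv ψ) (c + β * p) +
            p * β ^ 2 * deriv (deriv (deriv ψ)) (c + β * p)|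
          = (1 / 2) * |2 * β * deriv (deriv ψ) (c + β * p) +
            p * β ^ 2 * deriv (deriv (deriv ψ)) (c + β * p)| := by norm_num
        _ ≤ (1 / 2) * (2 * Cθ * max M2 0 + P * Cθ ^ 2 * max M3 0) := by linarith
    refine habs.trans ?_
    have : (0 : ℝ) ≤ P * Cθ ^ 2 * max M3 0 := by positivity
    linarith
  have hne : (CrSet d ψ pl pu Cb Cθ).Nonempty := by
    refine ⟨_, ⟨0, 0, pl, fun i => by simpa using hCb, ⟨le_rfl, hrange⟩, ?_, rfl⟩⟩
    simpa [l1] using hCθ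
  have hbdd : BddAbove (CrSet d ψ pl pu Cb Cθ) := ⟨_, fun r hr => hkey r hr⟩
  constructor
  · obtain ⟨r0, hr0⟩ := hne
    have hr0' : 0 ≤ r0 := by
      obtain ⟨θ, zv, p, _, _, _, hre⟩ := hr0
      rw [hre]; positivity
    exact le_trans hr0' (le_csSup hbdd hr0)
  · exact Real.sSup_le hkey (by positivity)

private lemma count_exploration_le (T m Υ : ℕ) (τh : ℕ → ℕ) (hT : 2 ≤ T) (hΥ : 1 ≤ Υ)
    (hΥT : Υ ≤ T) (h0 : τh 0 = 0) (hmono : ∀ k < Υ, τh k < τh (k + 1))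
    (hlt : ∀ k ≤ Υ, τh k < T) (htop : ∀ k, Υ < k → τh k = T) :
    (((Finset.Icc 1 T).filter (fun t => isExpl T m τh Υ t)).card : ℝ) ≤
      4 * m * Real.sqrt ((Υ : ℝ) * T) := by
  classical
  have hmono' : ∀ r, r ≤ Υ → τh r ≤ τh (r + 1) := by
    intro r hr
    rcases lt_or_eq_of_le hr with h | h
    · exact (hmono r h).le
    · rw [h, htop (Υ + 1) (by omega)]
      exact (hlt Υ le_rfl).le
  have hsub : (Finset.Icc 1 T).filter (fun t => isExpl T m τh Υ t) ⊆
      (Finset.range (Υ + 1)).biUnion (fun r =>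
        (Finset.Ioc (τh r) (τh (r + 1))).filter
          (fun t => (t - τh r - 1) % cyc T m r < m)) := by
    intro t ht
    simp only [Finset.mem_filter, Finset.mem_Icc] at ht
    obtain ⟨⟨ht1, htT⟩, hexp⟩ := ht
    have hFne : ((Finset.range (Υ + 1)).filter (fun k => τh k < t)).Nonempty :=
      ⟨0, Finset.mem_filter.2 ⟨Finset.mem_range.2 (by omega), by rw [h0]; omega⟩⟩
    have hrmem := sup_id_mem _ hFne
    set r := ((Finset.range (Υ + 1)).filter (fun k => τh k < t)).sup id with hrdef
    simp only [Finset.mem_filter, Finset.mem_range] at hrmem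
    have hrΥ : r ≤ Υ := by omega
    have hub : t ≤ τh (r + 1) := by
      rcases eq_or_lt_of_le hrΥ with hc | hc
      · rw [hc, htop (Υ + 1) (by omega)]; exact htT
      · by_contra hcon
        push_neg at hcon
        have hmem : r + 1 ∈ (Finset.range (Υ + 1)).filter (fun k => τh k < t) :=
          Finset.mem_filter.2 ⟨Finset.mem_range.2 (by omega), hcon⟩
        have hle := Finset.le_sup (f := id) hmem
        simp only [id] at hle
        omega
    have hreg : regime τh Υ t = r := rfl
    refine Finset.mem_biUnion.2 ⟨r, Finset.mem_range.2 (by omega),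
      Finset.mem_filter.2 ⟨Finset.mem_Ioc.2 ⟨hrmem.2, hub⟩, ?_⟩⟩
    have hexp' : (t - τh (regime τh Υ t) - 1) % cyc T m (regime τh Υ t) < m := hexp
    rwa [hreg] at hexp'
  have hcard1 : ((Finset.Icc 1 T).filter (fun t => isExpl T m τh Υ t)).card ≤
      ∑ r ∈ Finset.range (Υ + 1), m * ((τh (r + 1) - τh r) / cyc T m r + 1) :=
    (Finset.card_le_card hsub).trans
      (Finset.card_biUnion_le.trans (Finset.sum_le_sum fun r _ => count_expl_Ioc _ _ _ _))
  set n' : ℕ := nExp T Υ with hn'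
  have hTpos : (0 : ℝ) < (T : ℝ) := by exact_mod_cast (by omega : 0 < T)
  have hn'pos : 0 < n' := by
    rw [hn']
    unfold nExp
    exact Nat.ceil_pos.2 (Real.sqrt_pos.2 (div_pos hTpos (by positivity)))
  have hn'le : ∀ r, r ≤ Υ → n' ≤ cyc T m r := by
    intro r hr
    have h1 : nExp T Υ ≤ nExp T r := by
      unfold nExp
      apply Nat.ceil_le_ceil
      apply Real.sqrt_le_sqrt
      apply div_le_div_of_nonneg_left hTpos.le (by positivity)
      have : (r : ℝ) ≤ (Υ : ℝ) := by exact_mod_cast hr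
      linarith
    calc n' = nExp T Υ := hn'
      _ ≤ nExp T r := h1
      _ ≤ m + nExp T r := Nat.le_add_left _ _
  have hterm : ∀ r ∈ Finset.range (Υ + 1),
      ((m * ((τh (r + 1) - τh r) / cyc T m r + 1) : ℕ) : ℝ) ≤
        (m : ℝ) * (((τh (r + 1) - τh r : ℕ) : ℝ) / (n' : ℝ) + 1) := by
    intro r hr
    rw [Finset.mem_range] at hr
    push_cast
    apply mul_le_mul_of_nonneg_left _ (Nat.cast_nonneg m)
    apply add_le_add_left
    calc (((τh (r + 1) - τh r) / cyc T m r : ℕ) : ℝ)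
        ≤ ((τh (r + 1) - τh r : ℕ) : ℝ) / ((cyc T m r : ℕ) : ℝ) := Nat.cast_div_le
      _ ≤ ((τh (r + 1) - τh r : ℕ) : ℝ) / (n' : ℝ) := by
          apply div_le_div_of_nonneg_left (Nat.cast_nonneg _)
          · exact_mod_cast hn'pos
          · exact_mod_cast hn'le r (by omega)
  have htel : ∑ r ∈ Finset.range (Υ + 1), ((τh (r + 1) - τh r : ℕ) : ℝ) = (T : ℝ) := by
    have hcongr : ∀ r ∈ Finset.range (Υ + 1),
        ((τh (r + 1) - τh r : ℕ) : ℝ) = ((τh (r + 1) : ℕ) : ℝ) - ((τh r : ℕ) : ℝ) := by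
      intro r hr
      rw [Finset.mem_range] at hr
      exact_mod_cast Nat.cast_sub (hmono' r (by omega))
    rw [Finset.sum_congr rfl hcongr, Finset.sum_range_sub (fun r => ((τh r : ℕ) : ℝ))]
    rw [h0, htop (Υ + 1) (by omega)]
    simp
  have hsum : (((Finset.Icc 1 T).filter (fun t => isExpl T m τh Υ t)).card : ℝ) ≤
      (m : ℝ) * ((T : ℝ) / (n' : ℝ)) + (m : ℝ) * ((Υ : ℝ) + 1) := by
    have h1 : (((Finset.Icc 1 T).filter (fun t => isExpl T m τh Υ t)).card : ℝ) ≤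
        ∑ r ∈ Finset.range (Υ + 1),
          ((m * ((τh (r + 1) - τh r) / cyc T m r + 1) : ℕ) : ℝ) := by
      rw [← Nat.cast_sum]
      exact_mod_cast hcard1
    calc (((Finset.Icc 1 T).filter (fun t => isExpl T m τh Υ t)).card : ℝ)
        ≤ _ := h1
      _ ≤ ∑ r ∈ Finset.range (Υ + 1),
            (m : ℝ) * (((τh (r + 1) - τh r : ℕ) : ℝ) / (n' : ℝ) + 1) :=
          Finset.sum_le_sum hterm
      _ = (m : ℝ) * ((∑ r ∈ Finset.range (Υ + 1),
            ((τh (r + 1) - τh r : ℕ) : ℝ)) / (n' : ℝ)) + (m : ℝ) * ((Υ : ℝ) + 1) := by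
          simp only [mul_add, mul_one]
          rw [Finset.sum_add_distrib, Finset.sum_const, Finset.card_range, nsmul_eq_mul,
            Finset.sum_div, Finset.mul_sum]
          push_cast
          ring
      _ = (m : ℝ) * ((T : ℝ) / (n' : ℝ)) + (m : ℝ) * ((Υ : ℝ) + 1) := by rw [htel]
  have hdiv : (T : ℝ) / (n' : ℝ) ≤ Real.sqrt ((T : ℝ) * ((Υ : ℝ) + 1)) := by
    rw [div_le_iff₀ (by exact_mod_cast hn'pos)]
    have key : Real.sqrt ((T : ℝ) / ((Υ : ℝ) + 1)) * Real.sqrt ((T : ℝ) * ((Υ : ℝ) + 1))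
        = (T : ℝ) := by
      rw [← Real.sqrt_mul (by positivity)]
      rw [show (T : ℝ) / ((Υ : ℝ) + 1) * ((T : ℝ) * ((Υ : ℝ) + 1)) = (T : ℝ) ^ 2 by
        field_simp]
      exact Real.sqrt_sq (Nat.cast_nonneg T)
    have hceil : Real.sqrt ((T : ℝ) / ((Υ : ℝ) + 1)) ≤ (n' : ℝ) := by
      rw [hn']
      unfold nExp
      exact Nat.le_ceil _
    calc (T : ℝ) = Real.sqrt ((T : ℝ) / ((Υ : ℝ) + 1)) *
          Real.sqrt ((T : ℝ) * ((Υ : ℝ) + 1)) := key.symm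
      _ ≤ (n' : ℝ) * Real.sqrt ((T : ℝ) * ((Υ : ℝ) + 1)) :=
          mul_le_mul_of_nonneg_right hceil (Real.sqrt_nonneg _)
      _ = Real.sqrt ((T : ℝ) * ((Υ : ℝ) + 1)) * (n' : ℝ) := mul_comm _ _
  have hΥ1 : (1 : ℝ) ≤ (Υ : ℝ) := by exact_mod_cast hΥ
  have hsq1 : Real.sqrt ((T : ℝ) * ((Υ : ℝ) + 1)) ≤ 2 * Real.sqrt ((Υ : ℝ) * (T : ℝ)) := by
    have h1 : (T : ℝ) * ((Υ : ℝ) + 1) ≤ 4 * ((Υ : ℝ) * (T : ℝ)) := by nlinarith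
    calc Real.sqrt ((T : ℝ) * ((Υ : ℝ) + 1)) ≤ Real.sqrt (4 * ((Υ : ℝ) * (T : ℝ))) :=
        Real.sqrt_le_sqrt h1
      _ = 2 * Real.sqrt ((Υ : ℝ) * (T : ℝ)) := by
          rw [Real.sqrt_mul (by norm_num : (0 : ℝ) ≤ 4),
            show (4 : ℝ) = 2 ^ 2 by norm_num, Real.sqrt_sq (by norm_num : (0 : ℝ) ≤ 2)]
  have hsq2 : (Υ : ℝ) + 1 ≤ 2 * Real.sqrt ((Υ : ℝ) * (T : ℝ)) := by
    have hΥT' : (Υ : ℝ) ≤ (T : ℝ) := by exact_mod_cast hΥT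
    have h2 : (Υ : ℝ) ≤ Real.sqrt ((Υ : ℝ) * (T : ℝ)) := by
      have h3 := Real.sqrt_le_sqrt (show (Υ : ℝ) * (Υ : ℝ) ≤ (Υ : ℝ) * (T : ℝ) by nlinarith)
      rwa [Real.sqrt_mul_self (by positivity)] at h3
    linarith
  calc (((Finset.Icc 1 T).filter (fun t => isExpl T m τh Υ t)).card : ℝ)
      ≤ (m : ℝ) * ((T : ℝ) / (n' : ℝ)) + (m : ℝ) * ((Υ : ℝ) + 1) := hsum
    _ ≤ (m : ℝ) * (2 * Real.sqrt ((Υ : ℝ) * (T : ℝ))) +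
        (m : ℝ) * (2 * Real.sqrt ((Υ : ℝ) * (T : ℝ))) := by
        apply add_le_add
        · exact mul_le_mul_of_nonneg_left (hdiv.trans hsq1) (Nat.cast_nonneg m)
        · exact mul_le_mul_of_nonneg_left hsq2 (Nat.cast_nonneg m)
    _ = 4 * (m : ℝ) * Real.sqrt ((Υ : ℝ) * (T : ℝ)) := by ring

private lemma q_range_ae {Ω : Type} [MeasurableSpace Ω] (μ : Measure Ω) (q : Ω → ℝ)
    (hq : Measurable q) (P : Finset ℝ) (pl pu : ℝ) (hP : (P : Set ℝ) ⊆ Set.Icc pl pu)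
    (hmap : Measure.map q μ = unifOn P) : ∀ᵐ ω ∂μ, q ω ∈ Set.Icc pl pu := by
  rw [ae_iff]
  have hpre : {ω | ¬ q ω ∈ Set.Icc pl pu} = q ⁻¹' (Set.Icc pl pu)ᶜ := rfl
  rw [hpre, ← Measure.map_apply hq (measurableSet_Icc.compl), hmap]
  unfold unifOn
  rw [Measure.smul_apply, Measure.coe_finset_sum, Finset.sum_apply]
  have hz : ∀ p ∈ P, Measure.dirac p (Set.Icc pl pu)ᶜ = 0 := by
    intro p hp
    rw [Measure.dirac_apply' _ (measurableSet_Icc.compl)]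
    simp [Set.indicator_apply, hP hp]
  rw [Finset.sum_congr rfl hz]
  simp
/-- **Lemma EC.9 (regret due to price experimentation).**  Under the CPDP policy with
sufficiently large absolute constants `c_m, c_λ, c_γ`, Assumptions 2.1, 2.2 and the
SNR Assumption 4.1 (with `c_snr* > 2c_snr/c_m`), there is an absolute constant
`C_{R,I}` such that `R_{T,I} ≤ C_{R,I}·s·log(Td)·√(Υ_T·T)`. -/
theorem regret_experiments_bound
    (ψ : ℝ → ℝ) (a pl pu Cb Cθ σl σu δ : ℝ)
    (hψ : ContDiff ℝ (⊤ : ℕ∞) ψ) (hψ'' : ∀ v : ℝ, 0 < deriv (deriv ψ) v)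
    (ha : 0 < a) (hrange : pl ≤ pu) (hCb : 0 < Cb) (hCθ : 0 < Cθ)
    (hσl : 0 < σl) (hσu : 0 < σu) (hδ : 0 < δ) :
    ∃ cm clam cgam csnr cstar CRI : ℝ,
      0 < cm ∧ 0 < clam ∧ 0 < cgam ∧ 0 < csnr ∧ 0 < cstar ∧ 0 < CRI ∧
      2 * csnr / cm < cstar ∧
      ∀ (Ω : Type) [MeasurableSpace Ω] (μ : Measure Ω) [IsProbabilityMeasure μ]
        (d T s Υ : ℕ) (Ptil : Finset ℝ) (τ : ℕ → ℕ) (θ : ℕ → Fin d → ℝ)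
        (z : ℕ → Ω → Fin (d - 1) → ℝ) (y : ℕ → Ω → ℝ) (popt : ℕ → Ω → ℝ)
        (m : ℕ) (lam gam : ℝ)
        (run : CPDPRun Ω μ d T s ψ a pl pu Cθ lam gam Ptil m θ z y),
        Env μ d T s Υ ψ Cb Cθ σl σu δ τ θ z →
        OptPrices ψ pl pu T θ z popt →
        1 ≤ Υ →
        m = ⌈cm * s * Real.log (T * d)⌉₊ →
        lam = clam * Real.sqrt (Real.log (T * d)) →
        gam = cgam * s * lam ^ 2 →
        SNR T m Υ τ θ cstar →
        RTI μ T m (CrC d ψ pl pu Cb Cθ)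
            (goodEvent T m Υ τ θ cm csnr run.tauhat run.Uhat)
            run.tauhat run.Uhat popt run.price ≤
          CRI * s * Real.log (T * d) * Real.sqrt ((Υ : ℝ) * T) := by
  obtain ⟨B, hB0, hBd⟩ := exists_crc_bound ψ hψ pl pu Cb Cθ hrange hCb.le hCθ.le
  refine ⟨1, 1, 1, 1, 3, 12 * (B * (pu - pl) ^ 2 + 1), one_pos, one_pos, one_pos, one_pos,
    by norm_num, by positivity, by norm_num, ?_⟩
  intro Ω _ μ _ d T s Υ Ptil τ θ z y popt m lam gam run hEnv hOpt hΥ hm hlam hgam hSNR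
  -- Basic consequences of the assumptions
  have hτk : ∀ k, k ≤ Υ + 1 → k ≤ τ k := by
    intro k
    induction k with
    | zero => intro _; exact Nat.zero_le _
    | succ n ih =>
      intro h
      have h1 := hEnv.τ_mono n (by omega)
      have h2 := ih (by omega)
      omega
  have hTge : Υ + 1 ≤ T := by
    have h := hτk (Υ + 1) le_rfl
    rwa [hEnv.τ_last] at h
  have hT2 : 2 ≤ T := by omega
  have hΥT : Υ ≤ T := by omega
  have hsnr1 := hSNR 1 le_rfl hΥ
  obtain ⟨i, hi⟩ : ∃ i : Fin d, θ (τ 1 + 1) i - θ (τ 1) i ≠ 0 := by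
    by_contra hcon
    push_neg at hcon
    have hk0 : kappa θ τ 1 = 0 := by
      unfold kappa l2
      simp [hcon]
    rw [hk0] at hsnr1
    norm_num at hsnr1
  have hd1 : 1 ≤ d := i.pos
  have hs1 : 1 ≤ s := by
    rcases eq_or_ne (θ (τ 1) i) 0 with h | h
    · have h2 : θ (τ 1 + 1) i ≠ 0 := by
        intro hx
        exact hi (by rw [hx, h, sub_zero])
      have h3 : 1 ≤ spars (θ (τ 1 + 1)) :=
        Finset.card_pos.2 ⟨i, Finset.mem_filter.2 ⟨Finset.mem_univ _, h2⟩⟩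
      exact h3.trans (hEnv.θ_sparse _)
    · have h3 : 1 ≤ spars (θ (τ 1)) :=
        Finset.card_pos.2 ⟨i, Finset.mem_filter.2 ⟨Finset.mem_univ _, h⟩⟩
      exact h3.trans (hEnv.θ_sparse _)
  have hs1' : (1 : ℝ) ≤ (s : ℝ) := by exact_mod_cast hs1
  have hTd2 : (2 : ℝ) ≤ (T : ℝ) * (d : ℝ) := by
    have h1 : (2 : ℝ) ≤ (T : ℝ) := by exact_mod_cast hT2
    have h2 : (1 : ℝ) ≤ (d : ℝ) := by exact_mod_cast hd1
    nlinarith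
  have hlog2 : Real.log 2 ≤ Real.log ((T : ℝ) * (d : ℝ)) :=
    Real.log_le_log (by norm_num) hTd2
  have hlogpos : 0 < Real.log ((T : ℝ) * (d : ℝ)) :=
    lt_of_lt_of_le (Real.log_pos (by norm_num)) hlog2
  have hmle : (m : ℝ) ≤ 3 * (s : ℝ) * Real.log ((T : ℝ) * (d : ℝ)) := by
    rw [hm]
    have hx0 : (0 : ℝ) ≤ 1 * (s : ℝ) * Real.log ((T : ℝ) * (d : ℝ)) := by
      have := hlogpos.le
      positivity
    have h1 : ((⌈1 * (s : ℝ) * Real.log ((T : ℝ) * (d : ℝ))⌉₊ : ℕ) : ℝ) <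
        1 * (s : ℝ) * Real.log ((T : ℝ) * (d : ℝ)) + 1 := Nat.ceil_lt_add_one hx0
    have h2 : (1 : ℝ) ≤ 2 * ((s : ℝ) * Real.log ((T : ℝ) * (d : ℝ))) := by
      have hl2 : (0.6931471803 : ℝ) < Real.log 2 := Real.log_two_gt_d9
      nlinarith
    nlinarith
  -- abbreviations
  set A : Set Ω := goodEvent T m Υ τ θ 1 1 run.tauhat run.Uhat with hA
  unfold RTI
  set g : Ω → ℝ := fun ω' => ∑ t ∈ Finset.Icc 1 T,
    if isExpl T m (run.tauhat ω') (run.Uhat ω') t then (popt t ω' - run.price t ω') ^ 2 else 0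
    with hg
  set C₀ : ℝ := (pu - pl) ^ 2 * (4 * (m : ℝ) * Real.sqrt ((Υ : ℝ) * (T : ℝ))) with hC₀
  have hC₀0 : 0 ≤ C₀ := by rw [hC₀]; positivity
  have hqa : ∀ᵐ ω ∂μ, ∀ t ∈ Finset.Icc 1 T, run.q t ω ∈ Set.Icc pl pu :=
    (Finset.eventually_all _).2 fun t _ =>
      q_range_ae μ (run.q t) (run.meas_q t) Ptil pl pu run.Ptil_sub (run.q_unif t)
  have hptw : ∀ᵐ ω ∂μ, A.indicator g ω ≤ C₀ := by
    filter_upwards [hqa] with ω hω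
    by_cases hAω : ω ∈ A
    · rw [Set.indicator_of_mem hAω]
      have hU : run.Uhat ω = Υ := hAω.1
      have hbound : g ω ≤ (pu - pl) ^ 2 *
          (((Finset.Icc 1 T).filter (fun t => isExpl T m (run.tauhat ω) Υ t)).card : ℝ) := by
        rw [hg]
        simp only [hU]
        calc (∑ t ∈ Finset.Icc 1 T,
              if isExpl T m (run.tauhat ω) Υ t then (popt t ω - run.price t ω) ^ 2 else 0)
            ≤ ∑ t ∈ Finset.Icc 1 T,
              (if isExpl T m (run.tauhat ω) Υ t then (pu - pl) ^ 2 else 0) := by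
              refine Finset.sum_le_sum fun t ht => ?_
              rw [Finset.mem_Icc] at ht
              by_cases he : isExpl T m (run.tauhat ω) Υ t
              · rw [if_pos he, if_pos he]
                have he' : isExpl T m (run.tauhat ω) (run.Uhat ω) t := by rw [hU]; exact he
                have hprice : run.price t ω = run.q t ω :=
                  run.explore_price ω t ht.1 ht.2 he'
                have hq := hω t (Finset.mem_Icc.2 ht)
                have hpo := (hOpt t ht.1 ht.2 ω).1
                rw [hprice]
                rw [Set.mem_Icc] at hq hpo
                exact sq_le_sq' (by linarith [hq.1, hq.2, hpo.1, hpo.2])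
                  (by linarith [hq.1, hq.2, hpo.1, hpo.2])
              · rw [if_neg he, if_neg he]
            _ = (((Finset.Icc 1 T).filter
                  (fun t => isExpl T m (run.tauhat ω) Υ t)).card : ℝ) * (pu - pl) ^ 2 := by
                rw [← Finset.sum_filter, Finset.sum_const, nsmul_eq_mul]
            _ = (pu - pl) ^ 2 * _ := mul_comm _ _
      have hcount := count_exploration_le T m Υ (run.tauhat ω) hT2 hΥ hΥT
        (run.tauhat_zero ω) (fun k hk => run.tauhat_mono ω k (by rw [hU]; exact hk))
        (fun k hk => run.tauhat_lt ω k (by rw [hU]; exact hk))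
        (fun k hk => run.tauhat_top ω k (by rw [hU]; exact hk))
      calc g ω ≤ _ := hbound
        _ ≤ (pu - pl) ^ 2 * (4 * (m : ℝ) * Real.sqrt ((Υ : ℝ) * (T : ℝ))) :=
            mul_le_mul_of_nonneg_left hcount (by positivity)
        _ = C₀ := hC₀.symm
    · rw [Set.indicator_of_notMem hAω]
      exact hC₀0
  have hint : ∫ ω, A.indicator g ω ∂μ ≤ C₀ := by
    by_cases hI : Integrable (fun ω => A.indicator g ω) μ
    · calc ∫ ω, A.indicator g ω ∂μ ≤ ∫ _ω, C₀ ∂μ :=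
          integral_mono_ae hI (integrable_const _) hptw
        _ = C₀ := by simp
    · rw [integral_undef hI]
      exact hC₀0
  obtain ⟨hCr0, hCrB⟩ := hBd d
  have hsq0 : (0 : ℝ) ≤ Real.sqrt ((Υ : ℝ) * (T : ℝ)) := Real.sqrt_nonneg _
  calc CrC d ψ pl pu Cb Cθ * ∫ ω, A.indicator g ω ∂μ
      ≤ CrC d ψ pl pu Cb Cθ * C₀ := mul_le_mul_of_nonneg_left hint hCr0
    _ ≤ B * C₀ := mul_le_mul_of_nonneg_right hCrB hC₀0
    _ = (B * (pu - pl) ^ 2) * (4 * ((m : ℝ) * Real.sqrt ((Υ : ℝ) * (T : ℝ)))) := by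
        rw [hC₀]; ring
    _ ≤ (B * (pu - pl) ^ 2) * (4 * ((3 * (s : ℝ) * Real.log ((T : ℝ) * (d : ℝ))) *
          Real.sqrt ((Υ : ℝ) * (T : ℝ)))) := by
        apply mul_le_mul_of_nonneg_left _ (by positivity)
        apply mul_le_mul_of_nonneg_left _ (by norm_num)
        exact mul_le_mul_of_nonneg_right hmle hsq0
    _ ≤ (B * (pu - pl) ^ 2 + 1) * (4 * ((3 * (s : ℝ) * Real.log ((T : ℝ) * (d : ℝ))) *
          Real.sqrt ((Υ : ℝ) * (T : ℝ)))) := by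
        apply mul_le_mul_of_nonneg_right (by linarith)
        have := hlogpos.le
        positivity
    _ = 12 * (B * (pu - pl) ^ 2 + 1) * (s : ℝ) * Real.log ((T : ℝ) * (d : ℝ)) *
          Real.sqrt ((Υ : ℝ) * (T : ℝ)) := by ring


end CPDP

end
end

section
/- Under the CPDP policy with sufficiently large absolute constants c_m, c_λ, c_γ, Assumptions 2.1, 2.2 and the SNR Assumption 4.1 (with c_snr* > 2c_snr/c_m), there exists an absolute constant C_{R,II} depending only on c_m, c_λ, c_5, C_r and C_b such that the regret incurred during change-point detection delay satisfies R_{T,II} ≤ 2C_{R,II}·κ_min^{-2}·√(Υ_T·T), where κ_min = min_{1≤k≤Υ_T} κ_k. -/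
set_option maxHeartbeats 1000000


open MeasureTheory ProbabilityTheory Real Finset
open scoped ENNReal NNReal

noncomputable section

namespace CPDPAux

lemma block_count_le (L m a : ℕ) :
    ((Finset.Ico a (a + L)).filter fun u => m ≤ u % L).card ≤ L - m := by
  rcases Nat.eq_zero_or_pos L with hL | hL
  · simp [hL]
  calc ((Finset.Ico a (a + L)).filter fun u => m ≤ u % L).card
      ≤ (Finset.Ico m L).card := by
        apply Finset.card_le_card_of_injOn (fun u => u % L)
        · intro u hu
          simp only [Finset.mem_coe, Finset.mem_filter, Finset.mem_Ico] at hu ⊢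
          exact ⟨hu.2, Nat.mod_lt _ hL⟩
        · intro u hu v hv huv
          simp only [Finset.coe_filter, Set.mem_setOf_eq, Finset.mem_Ico] at hu hv
          have key : ∀ x y : ℕ, x ≤ y → a ≤ x → y < a + L → x % L = y % L → x = y := by
            intro x y hxy hax hy hmod
            have hdvd : L ∣ y - x := (Nat.modEq_iff_dvd' hxy).mp hmod
            have : y - x = 0 := Nat.eq_zero_of_dvd_of_lt hdvd (by omega)
            omega
          rcases le_total u v with h | h
          · exact key u v h hu.1.1 hv.1.2 huv
          · exact (key v u h hv.1.1 hu.1.2 huv.symm).symm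
      _ = L - m := Nat.card_Ico m L

lemma mod_count_le (L m q c : ℕ) :
    ((Finset.Ico c (c + q * L)).filter fun u => m ≤ u % L).card ≤ q * (L - m) := by
  induction q with
  | zero => simp
  | succ q ih =>
      have hsplit : c + (q + 1) * L = (c + q * L) + L := by ring
      rw [hsplit, ← Finset.Ico_union_Ico_eq_Ico (Nat.le_add_right _ _) (Nat.le_add_right _ _),
        Finset.filter_union]
      refine le_trans (Finset.card_union_le _ _) ?_
      have := block_count_le L m (c + q * L)
      have : q * (L - m) + (L - m) = (q + 1) * (L - m) := by ring
      omega

lemma sum_one_div_sqrt (n : ℕ) :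
    ∑ k ∈ Finset.Icc 1 n, 1 / Real.sqrt k ≤ 2 * Real.sqrt n := by
  induction n with
  | zero => simp
  | succ n ih =>
      rw [Finset.sum_Icc_succ_top (by omega : 1 ≤ n + 1)]
      have ha : (0:ℝ) < Real.sqrt (n + 1) := Real.sqrt_pos.mpr (by positivity)
      have ha2 : Real.sqrt (n + 1) ^ 2 = (n:ℝ) + 1 := Real.sq_sqrt (by positivity)
      have hb2 : Real.sqrt n ^ 2 = (n:ℝ) := Real.sq_sqrt (by positivity)
      have hb : (0:ℝ) ≤ Real.sqrt n := Real.sqrt_nonneg _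
      have h1 : 1 ≤ 2 * Real.sqrt (n+1) * (Real.sqrt (n+1) - Real.sqrt n) := by
        nlinarith [sq_nonneg (Real.sqrt (n+1) - Real.sqrt n)]
      have h2 : 1 / Real.sqrt (n+1) ≤ 2 * (Real.sqrt (n+1) - Real.sqrt n) := by
        rw [div_le_iff₀ ha]; nlinarith
      push_cast
      push_cast at ih
      linarith

end CPDPAux

namespace CPDP

lemma l2_le_l1 {d : ℕ} (v : Fin d → ℝ) : l2 v ≤ l1 v := by
  unfold l2 l1
  have h1 : ∑ i, v i ^ 2 = ∑ i, |v i| ^ 2 :=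
    Finset.sum_congr rfl fun i _ => (sq_abs _).symm
  rw [h1]
  calc Real.sqrt (∑ i, |v i| ^ 2) ≤ Real.sqrt ((∑ i, |v i|) ^ 2) :=
        Real.sqrt_le_sqrt (Finset.sum_sq_le_sq_sum_of_nonneg fun i _ => abs_nonneg _)
    _ = ∑ i, |v i| := Real.sqrt_sq (Finset.sum_nonneg fun i _ => abs_nonneg _)

lemma itd2 (f : ℝ → ℝ) : iteratedDeriv 2 f = deriv (deriv f) := by
  rw [show (2:ℕ) = 1 + 1 from rfl, iteratedDeriv_succ, iteratedDeriv_one]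

lemma crc_bound (ψ : ℝ → ℝ) (pl pu Cb Cθ : ℝ) (hψ : ContDiff ℝ (⊤ : ℕ∞) ψ)
    (hrange : pl ≤ pu) (hCb : 0 < Cb) (hCθ : 0 < Cθ) :
    ∃ K : ℝ, 0 ≤ K ∧ ∀ d : ℕ, 0 ≤ CrC d ψ pl pu Cb Cθ ∧ CrC d ψ pl pu Cb Cθ ≤ K := by
  set P := max |pl| |pu| with hP
  have hP0 : 0 ≤ P := le_trans (abs_nonneg pl) (le_max_left _ _)
  set R := Cθ * Cb + Cθ * P with hR
  have hpsiI : ContDiff ℝ ((⊤ : ℕ∞) : WithTop ℕ∞) ψ := hψ.of_le (by simp)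
  have hF : ContDiff ℝ ((⊤ : ℕ∞) : WithTop ℕ∞) (deriv ψ) := (contDiff_infty_iff_deriv.mp hpsiI).2
  have hF2 : ContDiff ℝ ((⊤ : ℕ∞) : WithTop ℕ∞) (deriv (deriv ψ)) := (contDiff_infty_iff_deriv.mp hF).2
  have hF3 : ContDiff ℝ ((⊤ : ℕ∞) : WithTop ℕ∞) (deriv (deriv (deriv ψ))) := (contDiff_infty_iff_deriv.mp hF2).2
  obtain ⟨C2, hC2⟩ := (isCompact_Icc (a := -R) (b := R)).exists_bound_of_continuousOn
    hF2.continuous.continuousOn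
  obtain ⟨C3, hC3⟩ := (isCompact_Icc (a := -R) (b := R)).exists_bound_of_continuousOn
    hF3.continuous.continuousOn
  set C2' := max C2 0 with hC2'
  set C3' := max C3 0 with hC3'
  have hC2'0 : 0 ≤ C2' := le_max_right _ _
  have hC3'0 : 0 ≤ C3' := le_max_right _ _
  set K := Cθ * C2' + P * Cθ ^ 2 * C3' with hK
  have hK0 : 0 ≤ K := by positivity
  refine ⟨K, hK0, fun d => ?_⟩
  have hmemle : ∀ r ∈ CrSet d ψ pl pu Cb Cθ, r ≤ K := by
    rintro r ⟨θ, zv, p, hz, hp, hθ, rfl⟩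
    have hl1 : ∑ i, |θ i| ≤ Cθ := hθ
    set b := ∑ i : Fin d, if (i:ℕ) < d - 1 then 0 else θ i with hbdef
    set c := ∑ i : Fin d, (if h : (i:ℕ) < d - 1 then zv ⟨i,h⟩ * θ i else 0) with hcdef
    have hdot : ∀ p' : ℝ, dot (aug d zv p') θ = c + b * p' := by
      intro p'
      have hterm : ∀ i : Fin d, (if h : (i:ℕ) < d - 1 then zv ⟨i,h⟩ else p') * θ i
          = (if h : (i:ℕ) < d - 1 then zv ⟨i,h⟩ * θ i else 0)
            + (if (i:ℕ) < d - 1 then 0 else θ i) * p' := by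
        intro i; by_cases h : (i:ℕ) < d - 1 <;> simp [h] <;> ring
      unfold dot aug
      rw [Finset.sum_congr rfl fun i _ => hterm i, Finset.sum_add_distrib, ← Finset.sum_mul]
    have hb : |b| ≤ Cθ := by
      calc |b| ≤ ∑ i : Fin d, |if (i:ℕ) < d - 1 then 0 else θ i| := Finset.abs_sum_le_sum_abs _ _
        _ ≤ ∑ i : Fin d, |θ i| := Finset.sum_le_sum fun i _ => by split <;> simp
        _ ≤ Cθ := hl1
    have hc : |c| ≤ Cθ * Cb := by
      calc |c| ≤ ∑ i : Fin d, |if h : (i:ℕ) < d - 1 then zv ⟨i,h⟩ * θ i else 0| :=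
            Finset.abs_sum_le_sum_abs _ _
        _ ≤ ∑ i : Fin d, Cb * |θ i| := Finset.sum_le_sum fun i _ => by
            split
            · rw [abs_mul]; exact mul_le_mul_of_nonneg_right (hz _) (abs_nonneg _)
            · simp; positivity
        _ = Cb * ∑ i : Fin d, |θ i| := by rw [Finset.mul_sum]
        _ ≤ Cb * Cθ := mul_le_mul_of_nonneg_left hl1 hCb.le
        _ = Cθ * Cb := mul_comm _ _
    have hpP : |p| ≤ P := by
      rw [abs_le]
      constructor
      · calc -P ≤ -|pl| := neg_le_neg (le_max_left _ _)
          _ ≤ pl := neg_abs_le pl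
          _ ≤ p := hp.1
      · exact le_trans hp.2 (le_trans (le_abs_self pu) (le_max_right _ _))
    have hξ : c + b * p ∈ Set.Icc (-R) R := by
      have h1 : |c + b * p| ≤ R := by
        calc |c + b * p| ≤ |c| + |b| * |p| := by
              rw [← abs_mul]; exact abs_add_le _ _
          _ ≤ Cθ * Cb + Cθ * P := add_le_add hc
              (mul_le_mul hb hpP (abs_nonneg _) hCθ.le)
      exact abs_le.mp h1
    have h2 : |deriv (deriv ψ) (c + b * p)| ≤ C2' :=
      le_trans (by simpa [Real.norm_eq_abs] using hC2 _ hξ) (le_max_left _ _)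
    have h3 : |deriv (deriv (deriv ψ)) (c + b * p)| ≤ C3' :=
      le_trans (by simpa [Real.norm_eq_abs] using hC3 _ hξ) (le_max_left _ _)
    have hFd : Differentiable ℝ (deriv ψ) := hF.differentiable (by simp)
    have hF2d : Differentiable ℝ (deriv (deriv ψ)) := hF2.differentiable (by simp)
    have hinner : ∀ x : ℝ, HasDerivAt (fun p' : ℝ => c + b * p') b x := by
      intro x
      simpa using ((hasDerivAt_id x).const_mul b).const_add c
    have hd1 : ∀ x : ℝ, HasDerivAt (fun p' => p' * deriv ψ (c + b * p'))
        (deriv ψ (c + b * x) + x * (deriv (deriv ψ) (c + b * x) * b)) x := by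
      intro x
      have hcomp : HasDerivAt (fun p' => deriv ψ (c + b * p'))
          (deriv (deriv ψ) (c + b * x) * b) x :=
        by have := (hFd (c + b * x)).hasDerivAt.comp x (hinner x); exact this
      have := (hasDerivAt_id' x).mul hcomp; simp only [one_mul] at this; exact this
    have hg1 : deriv (fun p' => p' * deriv ψ (c + b * p'))
        = fun x => deriv ψ (c + b * x) + x * (deriv (deriv ψ) (c + b * x) * b) :=
      funext fun x => (hd1 x).deriv
    have hd2 : HasDerivAt (fun x => deriv ψ (c + b * x) + x * (deriv (deriv ψ) (c + b * x) * b))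
        (deriv (deriv ψ) (c + b * p) * b
          + (1 * (deriv (deriv ψ) (c + b * p) * b)
            + p * (deriv (deriv (deriv ψ)) (c + b * p) * b * b))) p := by
      have h1 : HasDerivAt (fun x => deriv ψ (c + b * x))
          (deriv (deriv ψ) (c + b * p) * b) p :=
        by have := (hFd (c + b * p)).hasDerivAt.comp p (hinner p); exact this
      have hcompF2 : HasDerivAt (fun x => deriv (deriv ψ) (c + b * x))
          (deriv (deriv (deriv ψ)) (c + b * p) * b) p :=
        by have := (hF2d (c + b * p)).hasDerivAt.comp p (hinner p); exact this
      have h2' : HasDerivAt (fun x : ℝ => x * (deriv (deriv ψ) (c + b * x) * b))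
          (1 * (deriv (deriv ψ) (c + b * p) * b)
            + p * (deriv (deriv (deriv ψ)) (c + b * p) * b * b)) p := by
        exact (hasDerivAt_id' p).mul (hcompF2.mul_const b)
      exact h1.add h2'
    have hval : iteratedDeriv 2 (fun p' => rev d ψ θ zv p') p
        = deriv (deriv ψ) (c + b * p) * b
          + (1 * (deriv (deriv ψ) (c + b * p) * b)
            + p * (deriv (deriv (deriv ψ)) (c + b * p) * b * b)) := by
      have hrev : (fun p' => rev d ψ θ zv p') = fun p' => p' * deriv ψ (c + b * p') := by
        funext p'; rw [rev, hdot]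
      rw [hrev, itd2, hg1]
      exact hd2.deriv
    rw [hval]
    have t1 : |deriv (deriv ψ) (c + b * p) * b| ≤ C2' * Cθ := by
      rw [abs_mul]; exact mul_le_mul h2 hb (abs_nonneg _) hC2'0
    have t3 : |p * (deriv (deriv (deriv ψ)) (c + b * p) * b * b)| ≤ P * (C3' * Cθ * Cθ) := by
      rw [abs_mul, abs_mul, abs_mul]
      gcongr
    have habs : |deriv (deriv ψ) (c + b * p) * b
          + (1 * (deriv (deriv ψ) (c + b * p) * b)
            + p * (deriv (deriv (deriv ψ)) (c + b * p) * b * b))|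
        ≤ C2' * Cθ + (C2' * Cθ + P * (C3' * Cθ * Cθ)) := by
      refine le_trans (abs_add_le _ _) (add_le_add t1 (le_trans (abs_add_le _ _)
        (add_le_add (by rwa [one_mul]) t3)))
    rw [abs_mul]
    have : |(1/2 : ℝ)| = 1/2 := by norm_num
    rw [this]
    have hnn : 0 ≤ P * (C3' * Cθ * Cθ) := by positivity
    nlinarith [habs, hnn]
  have hbdd : BddAbove (CrSet d ψ pl pu Cb Cθ) := ⟨K, fun r hr => hmemle r hr⟩
  constructor
  · have hmem : |(1 / 2 : ℝ) * iteratedDeriv 2 (fun p' => rev d ψ (0 : Fin d → ℝ)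
        (0 : Fin (d-1) → ℝ) p') pl| ∈ CrSet d ψ pl pu Cb Cθ := by
      exact ⟨0, 0, pl, fun i => by simpa using hCb.le, ⟨le_refl pl, hrange⟩,
        by simpa [l1] using hCθ.le, rfl⟩
    exact le_trans (abs_nonneg _) (le_csSup hbdd hmem)
  · exact Real.sSup_le hmemle hK0

/-- **Lemma EC.10 (regret due to detection delay).**  Under the CPDP policy with
sufficiently large absolute constants `c_m, c_λ, c_γ`, Assumptions 2.1, 2.2 and the
SNR Assumption 4.1 (with `c_snr* > 2c_snr/c_m`), there is an absolute constant
`C_{R,II}` such that `R_{T,II} ≤ 2·C_{R,II}·κ_min⁻²·√(Υ_T·T)`. -/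
theorem regret_detection_delay_bound
    (ψ : ℝ → ℝ) (a pl pu Cb Cθ σl σu δ : ℝ)
    (hψ : ContDiff ℝ (⊤ : ℕ∞) ψ) (hψ'' : ∀ v : ℝ, 0 < deriv (deriv ψ) v)
    (ha : 0 < a) (hrange : pl ≤ pu) (hCb : 0 < Cb) (hCθ : 0 < Cθ)
    (hσl : 0 < σl) (hσu : 0 < σu) (hδ : 0 < δ) :
    ∃ cm clam cgam csnr cstar CRII : ℝ,
      0 < cm ∧ 0 < clam ∧ 0 < cgam ∧ 0 < csnr ∧ 0 < cstar ∧ 0 < CRII ∧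
      2 * csnr / cm < cstar ∧
      ∀ (Ω : Type) [MeasurableSpace Ω] (μ : Measure Ω) [IsProbabilityMeasure μ]
        (d T s Υ : ℕ) (Ptil : Finset ℝ) (τ : ℕ → ℕ) (θ : ℕ → Fin d → ℝ)
        (z : ℕ → Ω → Fin (d - 1) → ℝ) (y : ℕ → Ω → ℝ) (popt : ℕ → Ω → ℝ)
        (m : ℕ) (lam gam : ℝ)
        (run : CPDPRun Ω μ d T s ψ a pl pu Cθ lam gam Ptil m θ z y),
        Env μ d T s Υ ψ Cb Cθ σl σu δ τ θ z →
        OptPrices ψ pl pu T θ z popt →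
        1 ≤ Υ →
        m = ⌈cm * s * Real.log (T * d)⌉₊ →
        lam = clam * Real.sqrt (Real.log (T * d)) →
        gam = cgam * s * lam ^ 2 →
        SNR T m Υ τ θ cstar →
        RTII μ T m Υ (CrC d ψ pl pu Cb Cθ)
            (goodEvent T m Υ τ θ cm csnr run.tauhat run.Uhat)
            τ run.tauhat run.Uhat popt run.price ≤
          2 * CRII * (1 / kappaMin θ τ Υ ^ 2) * Real.sqrt ((Υ : ℝ) * T) := by
  obtain ⟨K, hK0, hKd⟩ := crc_bound ψ pl pu Cb Cθ hψ hrange hCb hCθ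
  refine ⟨1, 1, 1, 1, 3 + 4 * Cθ ^ 2,
    (3 / 2) * (K + 1) * (1 + 4 * Cθ ^ 2) * ((pu - pl) ^ 2 + 1),
    one_pos, one_pos, one_pos, one_pos, by positivity, by positivity,
    by rw [mul_one, div_one]; nlinarith [sq_nonneg Cθ], ?_⟩
  intro Ω _inst μ _instP d T s Υ Ptil τ θ z y popt m lam gam run env hopt hΥ hm hlam hgam hsnr
  set M : ℝ := (pu - pl) ^ 2 with hM
  have hM0 : 0 ≤ M := sq_nonneg _
  set c' : ℝ := 1 + 4 * Cθ ^ 2 with hc'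
  have hc'0 : (0:ℝ) < c' := by positivity
  -- basic facts about τ
  have τmono : ∀ j, j ≤ Υ + 1 → ∀ i, i < j → τ i < τ j := by
    intro j
    induction j with
    | zero => intro _ i hi; omega
    | succ j ih =>
        intro hj i hi
        rcases Nat.lt_or_ge i j with h | h
        · exact lt_trans (ih (by omega) i h) (env.τ_mono j (by omega))
        · have : i = j := by omega
          subst this
          exact env.τ_mono i (by omega)
  have hτge : ∀ j, j ≤ Υ + 1 → j ≤ τ j := by
    intro j
    induction j with
    | zero => intro _; omega
    | succ j ih =>
        intro hj
        have h1 := ih (by omega)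
        have h2 := env.τ_mono j (by omega)
        omega
  have hTΥ : Υ + 1 ≤ T := by
    have := hτge (Υ + 1) le_rfl
    rw [env.τ_last] at this
    exact this
  have hT1 : 1 ≤ T := by omega
  have hT0 : (0:ℝ) < T := by exact_mod_cast hT1
  -- kappa facts
  have hκpos : ∀ k, 1 ≤ k → k ≤ Υ → 0 < kappa θ τ k := by
    intro k hk1 hk2
    have hτ0 := env.τ_zero
    have hτk1 : 1 ≤ τ k := by
      have := τmono k (by omega) 0 (by omega)
      omega
    have hτkT : τ k < T := by
      have := τmono (Υ + 1) le_rfl k (by omega)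
      rw [env.τ_last] at this
      exact this
    have hne : θ (τ k) ≠ θ (τ k + 1) := (env.change_iff (τ k) hτk1 hτkT).mpr ⟨k, hk1, hk2, rfl⟩
    obtain ⟨i, hi⟩ := Function.ne_iff.mp hne
    unfold kappa l2
    apply Real.sqrt_pos.mpr
    have h1 : 0 < (θ (τ k + 1) i - θ (τ k) i) ^ 2 := by
      have hne2 : θ (τ k + 1) i - θ (τ k) i ≠ 0 := sub_ne_zero.mpr (Ne.symm hi)
      positivity
    refine lt_of_lt_of_le h1 ?_
    simpa using Finset.single_le_sum (f := fun j => (θ (τ k + 1) j - θ (τ k) j) ^ 2)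
      (fun j _ => sq_nonneg _) (Finset.mem_univ i)
  have hκle : ∀ k, kappa θ τ k ≤ 2 * Cθ := by
    intro k
    unfold kappa
    have h1 := l2_le_l1 (fun i => θ (τ k + 1) i - θ (τ k) i)
    have h2 : l1 (fun i => θ (τ k + 1) i - θ (τ k) i) ≤ l1 (θ (τ k + 1)) + l1 (θ (τ k)) := by
      unfold l1
      rw [← Finset.sum_add_distrib]
      refine Finset.sum_le_sum fun i _ => ?_
      calc |θ (τ k + 1) i - θ (τ k) i| ≤ |θ (τ k + 1) i| + |θ (τ k) i| := abs_sub _ _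
        _ ≤ _ := le_refl _
    have h3 := env.θ_mem (τ k + 1)
    have h4 := env.θ_mem (τ k)
    unfold Theta at h3 h4
    simp only [Set.mem_setOf_eq] at h3 h4
    calc l2 (fun i => θ (τ k + 1) i - θ (τ k) i) ≤ _ := h1
      _ ≤ l1 (θ (τ k + 1)) + l1 (θ (τ k)) := h2
      _ ≤ 2 * Cθ := by linarith
  -- kappaMin facts
  set κm := kappaMin θ τ Υ with hκmdef
  have hκm_mem : κm ∈ {r : ℝ | ∃ k, 1 ≤ k ∧ k ≤ Υ ∧ r = kappa θ τ k} := by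
    have hSeq : {r : ℝ | ∃ k, 1 ≤ k ∧ k ≤ Υ ∧ r = kappa θ τ k}
        = (fun k => kappa θ τ k) '' (Set.Icc 1 Υ) := by
      ext r
      simp only [Set.mem_setOf_eq, Set.mem_image, Set.mem_Icc]
      constructor
      · rintro ⟨k, h1, h2, h3⟩; exact ⟨k, ⟨h1, h2⟩, h3.symm⟩
      · rintro ⟨k, ⟨h1, h2⟩, h3⟩; exact ⟨k, h1, h2, h3.symm⟩
    have hSfin : {r : ℝ | ∃ k, 1 ≤ k ∧ k ≤ Υ ∧ r = kappa θ τ k}.Finite := by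
      rw [hSeq]; exact (Set.finite_Icc 1 Υ).image _
    have hSne : {r : ℝ | ∃ k, 1 ≤ k ∧ k ≤ Υ ∧ r = kappa θ τ k}.Nonempty :=
      ⟨kappa θ τ 1, 1, le_rfl, hΥ, rfl⟩
    exact Set.Nonempty.csInf_mem hSne hSfin
  obtain ⟨k0, hk01, hk0Υ, hk0eq⟩ := hκm_mem
  have hκm_pos : 0 < κm := hk0eq ▸ hκpos k0 hk01 hk0Υ
  have hκm_le2C : κm ≤ 2 * Cθ := hk0eq ▸ hκle k0
  have hκm_le : ∀ k, 1 ≤ k → k ≤ Υ → κm ≤ kappa θ τ k := by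
    intro k h1 h2
    have hSfin : {r : ℝ | ∃ k, 1 ≤ k ∧ k ≤ Υ ∧ r = kappa θ τ k}.Finite := by
      have hSeq : {r : ℝ | ∃ k, 1 ≤ k ∧ k ≤ Υ ∧ r = kappa θ τ k}
          = (fun k => kappa θ τ k) '' (Set.Icc 1 Υ) := by
        ext r
        simp only [Set.mem_setOf_eq, Set.mem_image, Set.mem_Icc]
        constructor
        · rintro ⟨k, h1, h2, h3⟩; exact ⟨k, ⟨h1, h2⟩, h3.symm⟩
        · rintro ⟨k, ⟨h1, h2⟩, h3⟩; exact ⟨k, h1, h2, h3.symm⟩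
      rw [hSeq]; exact (Set.finite_Icc 1 Υ).image _
    exact csInf_le hSfin.bddBelow ⟨k, h1, h2, rfl⟩
  -- ceil bound
  have hq : ∀ k, 1 ≤ k → k ≤ Υ →
      (⌈(1:ℝ) / (1 * kappa θ τ k ^ 2)⌉₊ : ℝ) ≤ c' / κm ^ 2 := by
    intro k hk1 hkΥ
    have hκ := hκpos k hk1 hkΥ
    have hκ2 : 0 < kappa θ τ k ^ 2 := by positivity
    have hκm2 : 0 < κm ^ 2 := by positivity
    have h1 : (⌈(1:ℝ) / (1 * kappa θ τ k ^ 2)⌉₊ : ℝ) < 1 / (1 * kappa θ τ k ^ 2) + 1 :=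
      Nat.ceil_lt_add_one (by positivity)
    have h2 : 1 / (1 * kappa θ τ k ^ 2) ≤ 1 / κm ^ 2 := by
      rw [one_mul]
      apply one_div_le_one_div_of_le hκm2
      have := hκm_le k hk1 hkΥ
      nlinarith
    have h3 : (1:ℝ) ≤ 4 * Cθ ^ 2 / κm ^ 2 := by
      rw [le_div_iff₀ hκm2]
      nlinarith
    have h4 : 1 / κm ^ 2 + 4 * Cθ ^ 2 / κm ^ 2 = c' / κm ^ 2 := by
      rw [hc']; ring
    linarith
  -- cycle length facts
  have hnpos : ∀ j, 1 ≤ nExp T j := by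
    intro j
    apply Nat.ceil_pos.mpr
    apply Real.sqrt_pos.mpr
    positivity
  have hcycpos : ∀ j, 0 < cyc T m j := by
    intro j
    have := hnpos j
    unfold cyc
    omega
  -- separation of detected change points
  have hsep : ∀ j, 1 ≤ j → j ≤ Υ →
      τ j + ⌈(1:ℝ) / (1 * kappa θ τ j ^ 2)⌉₊ * cyc T m (j - 1) < τ (j + 1) := by
    intro j hj1 hjΥ
    have hκ := hκpos j hj1 hjΥ
    have hκ2pos : 0 < kappa θ τ j ^ 2 := by positivity
    have hκ4 : kappa θ τ j ^ 2 ≤ 4 * Cθ ^ 2 := by nlinarith [hκle j]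
    have hL0 : (0:ℝ) < (cyc T m (j - 1) : ℝ) := by exact_mod_cast hcycpos (j - 1)
    have hmin := hsnr j hj1 hjΥ
    have hD : 3 + 4 * Cθ ^ 2 <
        ((τ (j + 1) - τ j : ℕ) : ℝ) / (cyc T m (j - 1) : ℝ) * kappa θ τ j ^ 2 :=
      lt_of_lt_of_le hmin (mul_le_mul_of_nonneg_right (min_le_right _ _) (sq_nonneg _))
    have hτle : τ j ≤ τ (j + 1) := le_of_lt (τmono (j + 1) (by omega) j (by omega))
    have hcast : ((τ (j + 1) - τ j : ℕ) : ℝ) = (τ (j + 1) : ℝ) - (τ j : ℝ) := by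
      push_cast [Nat.cast_sub hτle]; ring
    rw [hcast] at hD
    have hD2 : (3 + 4 * Cθ ^ 2) * (cyc T m (j - 1) : ℝ)
        < ((τ (j + 1) : ℝ) - (τ j : ℝ)) * kappa θ τ j ^ 2 := by
      have h5 := mul_lt_mul_of_pos_right hD hL0
      calc (3 + 4 * Cθ ^ 2) * (cyc T m (j - 1) : ℝ) < _ := h5
        _ = ((τ (j + 1) : ℝ) - (τ j : ℝ)) * kappa θ τ j ^ 2 := by
          field_simp
    have hqle : (⌈(1:ℝ) / (1 * kappa θ τ j ^ 2)⌉₊ : ℝ)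
        ≤ (1 + 4 * Cθ ^ 2) / kappa θ τ j ^ 2 := by
      have h1 : (⌈(1:ℝ) / (1 * kappa θ τ j ^ 2)⌉₊ : ℝ) < 1 / (1 * kappa θ τ j ^ 2) + 1 :=
        Nat.ceil_lt_add_one (by positivity)
      have h2 : 1 / (1 * kappa θ τ j ^ 2) + 1 = (1 + kappa θ τ j ^ 2) / kappa θ τ j ^ 2 := by
        field_simp
      have h3 : (1 + kappa θ τ j ^ 2) / kappa θ τ j ^ 2
          ≤ (1 + 4 * Cθ ^ 2) / kappa θ τ j ^ 2 := by gcongr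
      linarith
    have hkey : (⌈(1:ℝ) / (1 * kappa θ τ j ^ 2)⌉₊ : ℝ) * (cyc T m (j - 1) : ℝ)
        < (τ (j + 1) : ℝ) - (τ j : ℝ) := by
      calc (⌈(1:ℝ) / (1 * kappa θ τ j ^ 2)⌉₊ : ℝ) * (cyc T m (j - 1) : ℝ)
          ≤ (1 + 4 * Cθ ^ 2) / kappa θ τ j ^ 2 * (cyc T m (j - 1) : ℝ) :=
            mul_le_mul_of_nonneg_right hqle hL0.le
        _ < (3 + 4 * Cθ ^ 2) / kappa θ τ j ^ 2 * (cyc T m (j - 1) : ℝ) := by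
            apply mul_lt_mul_of_pos_right _ hL0
            gcongr
            · linarith
        _ = (3 + 4 * Cθ ^ 2) * (cyc T m (j - 1) : ℝ) / kappa θ τ j ^ 2 := by ring
        _ < (τ (j + 1) : ℝ) - (τ j : ℝ) := by
            rw [div_lt_iff₀ hκ2pos]
            exact hD2
    have hfin : (τ j : ℝ) + (⌈(1:ℝ) / (1 * kappa θ τ j ^ 2)⌉₊ : ℝ) * (cyc T m (j - 1) : ℝ)
        < (τ (j + 1) : ℝ) := by linarith
    exact_mod_cast hfin
  -- main pointwise bound
  have hmain : ∀ k, 1 ≤ k → k ≤ Υ → ∀ ω ∈ goodEvent T m Υ τ θ 1 1 run.tauhat run.Uhat,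
      (∑ t ∈ Finset.Ioc (τ k) (run.tauhat ω k),
        if isExpl T m (run.tauhat ω) (run.Uhat ω) t then 0
        else (popt t ω - run.price t ω) ^ 2)
      ≤ ((⌈(1:ℝ) / (1 * kappa θ τ k ^ 2)⌉₊ * nExp T (k - 1) : ℕ) : ℝ) * M := by
    intro k hk1 hkΥ ω hω
    obtain ⟨hU, hgood⟩ := hω
    have hτh_low : τ k ≤ run.tauhat ω k := (hgood k hk1 hkΥ).1
    have hτh_high : run.tauhat ω k
        ≤ τ k + ⌈(1:ℝ) / (1 * kappa θ τ k ^ 2)⌉₊ * cyc T m (k - 1) := (hgood k hk1 hkΥ).2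
    have hτhmono : ∀ j, j ≤ Υ → ∀ i, i ≤ j → run.tauhat ω i ≤ run.tauhat ω j := by
      intro j
      induction j with
      | zero =>
          intro _ i hi
          have : i = 0 := by omega
          rw [this]
      | succ j ih =>
          intro hj i hi
          rcases Nat.eq_or_lt_of_le hi with h | h
          · rw [h]
          · refine le_trans (ih (by omega) i (by omega)) (le_of_lt ?_)
            exact run.tauhat_mono ω j (by omega)
    have hτhkm1 : run.tauhat ω (k - 1) < τ k := by
      rcases Nat.eq_or_lt_of_le hk1 with h1 | h2
      · have hz0 : run.tauhat ω 0 = 0 := run.tauhat_zero ω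
        have hτ1 : 0 < τ 1 := by
          have h := τmono 1 (by omega) 0 (by omega)
          have := env.τ_zero
          omega
        have hk1' : k = 1 := h1.symm
        subst hk1'
        rw [show (1 - 1 : ℕ) = 0 from rfl, hz0]
        exact hτ1
      · have hj1 : 1 ≤ k - 1 := by omega
        have hg := (hgood (k - 1) hj1 (by omega)).2
        have hs := hsep (k - 1) hj1 (by omega)
        have hkk : k - 1 + 1 = k := by omega
        rw [hkk] at hs
        omega
    have hreg : ∀ t, τ k < t → t ≤ run.tauhat ω k → regime (run.tauhat ω) (run.Uhat ω) t = k - 1 := by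
      intro t ht1 ht2
      rw [hU]
      apply le_antisymm
      · apply Finset.sup_le
        intro j hj
        simp only [Finset.mem_filter, Finset.mem_range] at hj
        by_contra hcon
        have hkj : k ≤ j := by simp only [id] at hcon; omega
        have hle := hτhmono j (by omega) k hkj
        omega
      · have hmem : k - 1 ∈ (Finset.range (Υ + 1)).filter fun j => run.tauhat ω j < t := by
          simp only [Finset.mem_filter, Finset.mem_range]
          constructor
          · omega
          · omega
        exact Finset.le_sup (f := id) hmem
    -- rewrite the sum over the non-exploration filter
    have hsum : (∑ t ∈ Finset.Ioc (τ k) (run.tauhat ω k),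
          if isExpl T m (run.tauhat ω) (run.Uhat ω) t then 0
          else (popt t ω - run.price t ω) ^ 2)
        = ∑ t ∈ (Finset.Ioc (τ k) (run.tauhat ω k)).filter
            (fun t => ¬ isExpl T m (run.tauhat ω) (run.Uhat ω) t),
            (popt t ω - run.price t ω) ^ 2 := by
      rw [Finset.sum_filter]
      refine Finset.sum_congr rfl fun t ht => ?_
      by_cases h : isExpl T m (run.tauhat ω) (run.Uhat ω) t <;> simp [h]
    -- counting bound
    have hcard : ((Finset.Ioc (τ k) (run.tauhat ω k)).filter
          (fun t => ¬ isExpl T m (run.tauhat ω) (run.Uhat ω) t)).card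
        ≤ ⌈(1:ℝ) / (1 * kappa θ τ k ^ 2)⌉₊ * nExp T (k - 1) := by
      set L := cyc T m (k - 1) with hLdef
      set q := ⌈(1:ℝ) / (1 * kappa θ τ k ^ 2)⌉₊ with hqdef
      have hLm : L = m + nExp T (k - 1) := rfl
      have key : ∀ w : ℕ, run.tauhat ω k ≤ τ k + w →
          ((Finset.Ioc (τ k) (run.tauhat ω k)).filter
            (fun t => ¬ isExpl T m (run.tauhat ω) (run.Uhat ω) t)).card
          ≤ ((Finset.Ico (τ k - run.tauhat ω (k - 1))
              (τ k - run.tauhat ω (k - 1) + w)).filter (fun u => m ≤ u % L)).card := by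
        intro w hw
        apply Finset.card_le_card_of_injOn (fun t => t - (run.tauhat ω (k - 1) + 1))
        · intro t ht
          simp only [Finset.mem_coe, Finset.mem_filter, Finset.mem_Ioc, Finset.mem_Ico] at ht ⊢
          obtain ⟨⟨ht1, ht2⟩, hni⟩ := ht
          have hr : m ≤ (t - run.tauhat ω (k - 1) - 1) % L := by
            unfold isExpl at hni
            rw [hreg t ht1 ht2] at hni
            rw [hLdef]
            omega
          refine ⟨⟨by omega, by omega⟩, ?_⟩
          have heq : t - (run.tauhat ω (k - 1) + 1) = t - run.tauhat ω (k - 1) - 1 := by omega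
          rw [heq]
          exact hr
        · intro u hu v hv huv
          simp only [Finset.coe_filter, Set.mem_setOf_eq, Finset.mem_Ioc] at hu hv
          have huv' : u - (run.tauhat ω (k - 1) + 1) = v - (run.tauhat ω (k - 1) + 1) := huv
          omega
      calc ((Finset.Ioc (τ k) (run.tauhat ω k)).filter
            (fun t => ¬ isExpl T m (run.tauhat ω) (run.Uhat ω) t)).card
          ≤ ((Finset.Ico (τ k - run.tauhat ω (k - 1))
              (τ k - run.tauhat ω (k - 1) + q * L)).filter (fun u => m ≤ u % L)).card :=
            key (q * L) hτh_high
        _ ≤ q * (L - m) := CPDPAux.mod_count_le L m q _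
        _ = q * nExp T (k - 1) := by
            have hLn : L - m = nExp T (k - 1) := by omega
            rw [hLn]
    -- term bound
    have hbound : ∀ t ∈ (Finset.Ioc (τ k) (run.tauhat ω k)).filter
          (fun t => ¬ isExpl T m (run.tauhat ω) (run.Uhat ω) t),
        (popt t ω - run.price t ω) ^ 2 ≤ M := by
      intro t ht
      simp only [Finset.mem_filter, Finset.mem_Ioc] at ht
      obtain ⟨⟨ht1, ht2⟩, hni⟩ := ht
      have hτk1 : 1 ≤ τ k := by
        have h := τmono k (by omega) 0 (by omega)
        have := env.τ_zero
        omega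
      have ht1' : 1 ≤ t := by omega
      have htT : t ≤ T := by
        have := run.tauhat_lt ω k (by omega)
        omega
      have hpopt := (hopt t ht1' htT ω).1
      have hprice : run.price t ω ∈ Set.Icc pl pu := by
        rw [run.exploit_price ω t ht1' htT hni]
        exact run.greedy_mem _ _
      obtain ⟨h1, h2⟩ := hpopt
      obtain ⟨h3, h4⟩ := hprice
      rw [hM]
      nlinarith
    rw [hsum]
    calc (∑ t ∈ (Finset.Ioc (τ k) (run.tauhat ω k)).filter
            (fun t => ¬ isExpl T m (run.tauhat ω) (run.Uhat ω) t),
            (popt t ω - run.price t ω) ^ 2)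
        ≤ ((Finset.Ioc (τ k) (run.tauhat ω k)).filter
            (fun t => ¬ isExpl T m (run.tauhat ω) (run.Uhat ω) t)).card • M :=
          Finset.sum_le_card_nsmul _ _ _ hbound
      _ = (((Finset.Ioc (τ k) (run.tauhat ω k)).filter
            (fun t => ¬ isExpl T m (run.tauhat ω) (run.Uhat ω) t)).card : ℝ) * M :=
          nsmul_eq_mul _ _
      _ ≤ ((⌈(1:ℝ) / (1 * kappa θ τ k ^ 2)⌉₊ * nExp T (k - 1) : ℕ) : ℝ) * M := by
          apply mul_le_mul_of_nonneg_right _ hM0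
          exact_mod_cast hcard
  -- integral bound per k
  have hint : ∀ k, 1 ≤ k → k ≤ Υ →
      (∫ ω, (goodEvent T m Υ τ θ 1 1 run.tauhat run.Uhat).indicator
        (fun ω' => ∑ t ∈ Finset.Ioc (τ k) (run.tauhat ω' k),
          if isExpl T m (run.tauhat ω') (run.Uhat ω') t then 0
          else (popt t ω' - run.price t ω') ^ 2) ω ∂μ)
      ≤ ((⌈(1:ℝ) / (1 * kappa θ τ k ^ 2)⌉₊ * nExp T (k - 1) : ℕ) : ℝ) * M := by
    intro k hk1 hkΥ
    set B : ℝ := ((⌈(1:ℝ) / (1 * kappa θ τ k ^ 2)⌉₊ * nExp T (k - 1) : ℕ) : ℝ) * M with hB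
    have hBnn : 0 ≤ B := by
      rw [hB]
      exact mul_nonneg (Nat.cast_nonneg _) hM0
    have hle : ∀ ω, (goodEvent T m Υ τ θ 1 1 run.tauhat run.Uhat).indicator
        (fun ω' => ∑ t ∈ Finset.Ioc (τ k) (run.tauhat ω' k),
          if isExpl T m (run.tauhat ω') (run.Uhat ω') t then 0
          else (popt t ω' - run.price t ω') ^ 2) ω ≤ B := by
      intro ω
      by_cases hω : ω ∈ goodEvent T m Υ τ θ 1 1 run.tauhat run.Uhat
      · rw [Set.indicator_of_mem hω]
        exact hmain k hk1 hkΥ ω hω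
      · rw [Set.indicator_of_notMem hω]
        exact hBnn
    by_cases hInt : Integrable ((goodEvent T m Υ τ θ 1 1 run.tauhat run.Uhat).indicator
        (fun ω' => ∑ t ∈ Finset.Ioc (τ k) (run.tauhat ω' k),
          if isExpl T m (run.tauhat ω') (run.Uhat ω') t then 0
          else (popt t ω' - run.price t ω') ^ 2)) μ
    · calc (∫ ω, (goodEvent T m Υ τ θ 1 1 run.tauhat run.Uhat).indicator
          (fun ω' => ∑ t ∈ Finset.Ioc (τ k) (run.tauhat ω' k),
            if isExpl T m (run.tauhat ω') (run.Uhat ω') t then 0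
            else (popt t ω' - run.price t ω') ^ 2) ω ∂μ)
          ≤ ∫ _, B ∂μ := integral_mono hInt (integrable_const B) hle
        _ = B := by simp
    · rw [integral_undef hInt]
      exact hBnn
  -- sum over k of nExp
  have hsumn : ∑ k ∈ Finset.Icc 1 Υ, ((nExp T (k - 1) : ℕ) : ℝ)
      ≤ 3 * Real.sqrt ((Υ : ℝ) * T) := by
    have hterm : ∀ k ∈ Finset.Icc 1 Υ, ((nExp T (k - 1) : ℕ) : ℝ)
        ≤ Real.sqrt T * (1 / Real.sqrt k) + 1 := by
      intro k hk
      simp only [Finset.mem_Icc] at hk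
      have hkk : (k - 1 : ℕ) + 1 = k := by omega
      have h1 : nExp T (k - 1) = ⌈Real.sqrt ((T : ℝ) / k)⌉₊ := by
        unfold nExp
        congr 1
        rw [show (((k - 1 : ℕ) : ℝ) + 1) = ((k : ℕ) : ℝ) by exact_mod_cast congrArg (Nat.cast (R := ℝ)) hkk]
      rw [h1]
      have h2 : (⌈Real.sqrt ((T : ℝ) / k)⌉₊ : ℝ) < Real.sqrt ((T : ℝ) / k) + 1 :=
        Nat.ceil_lt_add_one (Real.sqrt_nonneg _)
      have h3 : Real.sqrt ((T : ℝ) / k) = Real.sqrt T * (1 / Real.sqrt k) := by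
        rw [Real.sqrt_div hT0.le]
        ring
      linarith [h2, h3.le, h3.ge]
    have hΥT' : (Υ : ℝ) ≤ Real.sqrt ((Υ : ℝ) * T) := by
      have h1 : ((Υ : ℝ)) * Υ ≤ (Υ : ℝ) * T := by
        apply mul_le_mul_of_nonneg_left _ (Nat.cast_nonneg _)
        exact_mod_cast by omega
      calc (Υ : ℝ) = Real.sqrt ((Υ : ℝ) * Υ) := (Real.sqrt_mul_self (Nat.cast_nonneg _)).symm
        _ ≤ Real.sqrt ((Υ : ℝ) * T) := Real.sqrt_le_sqrt h1
    calc ∑ k ∈ Finset.Icc 1 Υ, ((nExp T (k - 1) : ℕ) : ℝ)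
        ≤ ∑ k ∈ Finset.Icc 1 Υ, (Real.sqrt T * (1 / Real.sqrt k) + 1) :=
          Finset.sum_le_sum hterm
      _ = Real.sqrt T * (∑ k ∈ Finset.Icc 1 Υ, 1 / Real.sqrt k) + Υ := by
          rw [Finset.sum_add_distrib, ← Finset.mul_sum]
          simp [Nat.card_Icc]
      _ ≤ Real.sqrt T * (2 * Real.sqrt Υ) + Υ := by
          have := CPDPAux.sum_one_div_sqrt Υ
          have hs0 : (0:ℝ) ≤ Real.sqrt T := Real.sqrt_nonneg _
          nlinarith
      _ ≤ 3 * Real.sqrt ((Υ : ℝ) * T) := by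
          have h5 : Real.sqrt T * Real.sqrt Υ = Real.sqrt ((Υ : ℝ) * T) := by
            rw [← Real.sqrt_mul hT0.le, mul_comm ((T:ℝ)) _]
          nlinarith [hΥT']
  -- final assembly
  unfold RTII
  set Cr := CrC d ψ pl pu Cb Cθ with hCrdef
  obtain ⟨hCr0, hCrK⟩ := hKd d
  have hS1 : (∑ k ∈ Finset.Icc 1 Υ, ∫ ω, (goodEvent T m Υ τ θ 1 1 run.tauhat run.Uhat).indicator
        (fun ω' => ∑ t ∈ Finset.Ioc (τ k) (run.tauhat ω' k),
          if isExpl T m (run.tauhat ω') (run.Uhat ω') t then 0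
          else (popt t ω' - run.price t ω') ^ 2) ω ∂μ)
      ≤ ∑ k ∈ Finset.Icc 1 Υ,
          ((⌈(1:ℝ) / (1 * kappa θ τ k ^ 2)⌉₊ * nExp T (k - 1) : ℕ) : ℝ) * M := by
    refine Finset.sum_le_sum fun k hk => ?_
    simp only [Finset.mem_Icc] at hk
    exact hint k hk.1 hk.2
  have hS2 : (∑ k ∈ Finset.Icc 1 Υ,
        ((⌈(1:ℝ) / (1 * kappa θ τ k ^ 2)⌉₊ * nExp T (k - 1) : ℕ) : ℝ) * M)
      ≤ (c' / κm ^ 2 * M) * ∑ k ∈ Finset.Icc 1 Υ, ((nExp T (k - 1) : ℕ) : ℝ) := by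
    rw [Finset.mul_sum]
    refine Finset.sum_le_sum fun k hk => ?_
    simp only [Finset.mem_Icc] at hk
    have hqk := hq k hk.1 hk.2
    have hn0 : (0:ℝ) ≤ ((nExp T (k - 1) : ℕ) : ℝ) := Nat.cast_nonneg _
    push_cast
    have hkey := mul_le_mul_of_nonneg_right hqk
      (mul_nonneg hn0 hM0)
    nlinarith [hkey]
  have hκm2 : 0 < κm ^ 2 := by positivity
  have hsq0 : (0:ℝ) ≤ Real.sqrt ((Υ : ℝ) * T) := Real.sqrt_nonneg _
  have hS3 : (c' / κm ^ 2 * M) * (∑ k ∈ Finset.Icc 1 Υ, ((nExp T (k - 1) : ℕ) : ℝ))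
      ≤ (c' / κm ^ 2 * M) * (3 * Real.sqrt ((Υ : ℝ) * T)) := by
    apply mul_le_mul_of_nonneg_left hsumn
    positivity
  have hchain : (∑ k ∈ Finset.Icc 1 Υ, ∫ ω, (goodEvent T m Υ τ θ 1 1 run.tauhat run.Uhat).indicator
        (fun ω' => ∑ t ∈ Finset.Ioc (τ k) (run.tauhat ω' k),
          if isExpl T m (run.tauhat ω') (run.Uhat ω') t then 0
          else (popt t ω' - run.price t ω') ^ 2) ω ∂μ)
      ≤ (c' / κm ^ 2 * M) * (3 * Real.sqrt ((Υ : ℝ) * T)) :=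
    le_trans hS1 (le_trans hS2 hS3)
  have hRHS0 : (0:ℝ) ≤ (c' / κm ^ 2 * M) * (3 * Real.sqrt ((Υ : ℝ) * T)) := by positivity
  calc Cr * (∑ k ∈ Finset.Icc 1 Υ, ∫ ω, (goodEvent T m Υ τ θ 1 1 run.tauhat run.Uhat).indicator
        (fun ω' => ∑ t ∈ Finset.Ioc (τ k) (run.tauhat ω' k),
          if isExpl T m (run.tauhat ω') (run.Uhat ω') t then 0
          else (popt t ω' - run.price t ω') ^ 2) ω ∂μ)
      ≤ Cr * ((c' / κm ^ 2 * M) * (3 * Real.sqrt ((Υ : ℝ) * T))) :=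
        mul_le_mul_of_nonneg_left hchain hCr0
    _ ≤ K * ((c' / κm ^ 2 * M) * (3 * Real.sqrt ((Υ : ℝ) * T))) :=
        mul_le_mul_of_nonneg_right hCrK hRHS0
    _ = 3 * (K * c' * M) * (Real.sqrt ((Υ : ℝ) * T) / κm ^ 2) := by ring
    _ ≤ 3 * ((K + 1) * c' * (M + 1)) * (Real.sqrt ((Υ : ℝ) * T) / κm ^ 2) := by
        apply mul_le_mul_of_nonneg_right _ (by positivity)
        have : K * c' * M ≤ (K + 1) * c' * (M + 1) := by nlinarith
        linarith
    _ = 2 * ((3 / 2) * (K + 1) * c' * (M + 1)) * (1 / κm ^ 2) * Real.sqrt ((Υ : ℝ) * T) := by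
        ring
    _ = 2 * ((3 / 2) * (K + 1) * (1 + 4 * Cθ ^ 2) * ((pu - pl) ^ 2 + 1)) *
          (1 / kappaMin θ τ Υ ^ 2) * Real.sqrt ((Υ : ℝ) * T) := by
        rw [hc', hM, hκmdef]

end CPDP

end
end

section
/- Let (F_n) denote the Fibonacci sequence with F_1 = F_2 = 1 and F_{n+1} = F_n + F_{n−1}. For every integer n ≥ 1 and every integer k with 0 ≤ k ≤ n, it holds that 5·F_{n−k+1}·F_{k+1} ≥ F_{n+3}. Equivalently, with φ = (1+√5)/2, for all n ≥ 1, inf_{0≤k≤n} [φ^{n−k+1} − (1−φ)^{n−k+1}]·[φ^{k+1} − (1−φ)^{k+1}] / ([φ^{n+3} − (1−φ)^{n+3}]·[φ − (1−φ)]) ≥ 1/5. -/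
/-!
The addition formula gives `F_{a+b+3} = F_{a+1} F_{b+1} + F_{a+2} F_{b+2}`, and `F_{m+2} ≤ 2 F_{m+1}`,
so `F_{a+b+3} ≤ 5 F_{a+1} F_{b+1}`; take `a = n - k`, `b = k`. By Binet's formula each bracket
`φ^m - (1 - φ)^m` equals `F_m √5`, so the real ratio is `F_{n-k+1} F_{k+1} / F_{n+3}`.
-/

namespace Nat

theorem fib_add_two_le_two_mul_fib_add_one (m : ℕ) : fib (m + 2) ≤ 2 * fib (m + 1) := by
  rw [fib_add_two]
  linarith [fib_le_fib_succ (n := m)]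

theorem fib_add_add_three_le (a b : ℕ) : fib (a + b + 3) ≤ 5 * fib (a + 1) * fib (b + 1) :=
  calc fib (a + b + 3) = fib (a + 1) * fib (b + 1) + fib (a + 2) * fib (b + 2) := by
        rw [← fib_add, show a + 1 + (b + 1) + 1 = a + b + 3 by ring]
    _ ≤ fib (a + 1) * fib (b + 1) + 2 * fib (a + 1) * (2 * fib (b + 1)) := by
        gcongr
        · exact fib_add_two_le_two_mul_fib_add_one a
        · exact fib_add_two_le_two_mul_fib_add_one b
    _ = 5 * fib (a + 1) * fib (b + 1) := by ring

end Nat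

open scoped goldenRatio in
theorem Real.goldenRatio_pow_sub_goldenConj_pow (n : ℕ) : φ ^ n - ψ ^ n = Nat.fib n * √5 := by
  rw [coe_fib_eq, div_mul_cancel₀ _ (by positivity)]

/-- **Fibonacci ratio bound used in the minimax lower bound.**
Let `F` be the Fibonacci sequence with `F₁ = F₂ = 1` (i.e. `F n = Nat.fib n`).
For every `n ≥ 1` and every `0 ≤ k ≤ n` we have `5·F_{n−k+1}·F_{k+1} ≥ F_{n+3}`;
equivalently, with `φ = (1+√5)/2`,
`[φ^{n−k+1} − (1−φ)^{n−k+1}]·[φ^{k+1} − (1−φ)^{k+1}] / ([φ^{n+3} − (1−φ)^{n+3}]·[φ−(1−φ)]) ≥ 1/5`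
for all such `k`, so the infimum over `0 ≤ k ≤ n` is at least `1/5`. -/
theorem fib_ratio_lower_bound (φ : ℝ) (hφ : φ = (1 + Real.sqrt 5) / 2) :
    ∀ n : ℕ, 1 ≤ n → ∀ k : ℕ, k ≤ n →
      (5 * Nat.fib (n - k + 1) * Nat.fib (k + 1) ≥ Nat.fib (n + 3)) ∧
      ((1 : ℝ) / 5 ≤
        ((φ ^ (n - k + 1) - (1 - φ) ^ (n - k + 1)) * (φ ^ (k + 1) - (1 - φ) ^ (k + 1))) /
          ((φ ^ (n + 3) - (1 - φ) ^ (n + 3)) * (φ - (1 - φ)))) := by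
  intro n _ k hk
  have hfib : Nat.fib (n + 3) ≤ 5 * Nat.fib (n - k + 1) * Nat.fib (k + 1) := by
    simpa only [Nat.sub_add_cancel hk] using Nat.fib_add_add_three_le (n - k) k
  refine ⟨hfib, ?_⟩
  have hφ' : φ = Real.goldenRatio := hφ
  simp only [hφ', Real.one_sub_goldenConj, Real.goldenRatio_pow_sub_goldenConj_pow,
    Real.goldenRatio_sub_goldenConj]
  have hpos : (0 : ℝ) < Nat.fib (n + 3) := by exact_mod_cast Nat.fib_pos.mpr (by omega)
  have h5 : √5 * √5 = (5 : ℝ) := Real.mul_self_sqrt (by norm_num)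
  rw [div_le_div_iff₀ (by norm_num) (by positivity [hpos])]
  calc 1 * (Nat.fib (n + 3) * √5 * √5) = Nat.fib (n + 3) * 5 := by rw [mul_assoc, h5, one_mul]
    _ ≤ (5 * Nat.fib (n - k + 1) * Nat.fib (k + 1) : ℕ) * 5 := by gcongr
    _ = _ := by push_cast; linear_combination (-5 * Nat.fib (n - k + 1) * Nat.fib (k + 1) : ℝ) * h5
end
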